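/- arXiv:math/0611415 — 8 statements merged into one kernel-verified Lean document; each statement's English description precedes it below -/
import Mathlib

section
/- Let V be a vector space of dimension N = 2n over a field k of characteristic 2, with basis e_1,…,e_N, and let f be an alternating bilinear form on V satisfying: f(e_1,e_N)=1; f(e_i,e_N)=0 for n+1 ≤ i ≤ N; and f(e_i,e_k) + f(e_{i+1},e_k) + f(e_i,e_{k+1}) = 0 for all 1 ≤ i,k ≤ N-1 (with the convention e_0 = 0, f(e_0, -) = 0). Then f(e_i,e_j) = 0 for all n+1 ≤ i,j ≤ N. -/
/-- `V` a vector space of dimension `N = 2n` over a field `k` of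
characteristic 2 with basis `e_1, …, e_N` (convention `e_0 = 0`), and `f` an
alternating bilinear form with `f(e_1,e_N) = 1`, `f(e_i,e_N) = 0` for
`n+1 ≤ i ≤ N`, and `f(e_i,e_k) + f(e_{i+1},e_k) + f(e_i,e_{k+1}) = 0` for
`1 ≤ i,k ≤ N-1`.  Then `f(e_i,e_j) = 0` for all `n+1 ≤ i,j ≤ N`. -/
theorem stmt1 (k V : Type) [Field k] [CharP k 2] [AddCommGroup V] [Module k V]
    (n N : ℕ) (hn : 0 < n) (hN : N = 2 * n)
    (e : ℕ → V) (he0 : e 0 = 0)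
    (hbasis : LinearIndependent k (fun i : Fin N => e (i.1 + 1)))
    (f : V →ₗ[k] V →ₗ[k] k)
    (hsymm : ∀ x y : V, f x y = f y x)
    (halt : ∀ x : V, f x x = 0)
    (h1 : f (e 1) (e N) = 1)
    (h2 : ∀ i : ℕ, n + 1 ≤ i → i ≤ N → f (e i) (e N) = 0)
    (h3 : ∀ i m : ℕ, 1 ≤ i → i ≤ N - 1 → 1 ≤ m → m ≤ N - 1 →
      f (e i) (e m) + f (e (i + 1)) (e m) + f (e i) (e (m + 1)) = 0) :
    ∀ i j : ℕ, n + 1 ≤ i → i ≤ N → n + 1 ≤ j → j ≤ N → f (e i) (e j) = 0 := by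
  have htwo : (2 : k) = 0 := by exact_mod_cast CharP.cast_eq_zero k 2
  -- downward induction on j (as d = N - j)
  have key : ∀ d j, j + d = N → n + 1 ≤ j →
      ∀ i, n + 1 ≤ i → i ≤ N → f (e i) (e j) = 0 := by
    intro d
    induction d with
    | zero =>
      intro j hj hj1 i hi1 hi2
      have : j = N := by omega
      subst this
      exact h2 i hi1 hi2
    | succ d ih =>
      intro j hj hj1
      -- step lemma: entries in column j are constant on rows n+1..N
      have hstep : ∀ i, n + 1 ≤ i → i ≤ N - 1 →
          f (e i) (e j) = f (e (i + 1)) (e j) := by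
        intro i hi1 hi2
        have hrel := h3 i j (by omega) (by omega) (by omega) (by omega)
        have hz : f (e i) (e (j + 1)) = 0 :=
          ih (j + 1) (by omega) (by omega) i hi1 (by omega)
        rw [hz] at hrel
        linear_combination hrel - f (e (i + 1)) (e j) * htwo
      -- downward induction on i
      have inner : ∀ c i, i + c = N → n + 1 ≤ i → f (e i) (e j) = 0 := by
        intro c
        induction c with
        | zero =>
          intro i hi hi1
          have : i = N := by omega
          subst this
          rw [hsymm]
          exact h2 j hj1 (by omega)
        | succ c ihc =>
          intro i hi hi1
          rw [hstep i hi1 (by omega)]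
          exact ihc (i + 1) (by omega) (by omega)
      intro i hi1 hi2
      exact inner (N - i) i (by omega) hi1
  intro i j hi1 hi2 hj1 hj2
  exact key (N - j) j (by omega) hj1 i hi1 hi2
end

section
/- Let V, e_1,…,e_N, f be as follows: V has dimension N=2n over a field of characteristic 2, f is alternating bilinear with f(e_1,e_N)=1, f(e_i,e_N)=0 for n+1 ≤ i ≤ N, and f(e_i,e_k)+f(e_{i+1},e_k)+f(e_i,e_{k+1})=0 for 0 ≤ i,k ≤ N-1 (convention e_0=0). Then f(e_i,e_j)=0 whenever i+j ≤ N, and f(e_i,e_j)=1 whenever i+j = N+1. -/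
/-- Same setting as 2.5 of the paper (`dim V = N = 2n`, char 2,
`f` alternating with `f(e_1,e_N) = 1`, `f(e_i,e_N) = 0` for `n+1 ≤ i ≤ N`, and
the `v`-invariance relation for `0 ≤ i,k ≤ N-1`, convention `e_0 = 0`).
Then `f(e_i,e_j) = 0` whenever `i + j ≤ N` and `f(e_i,e_j) = 1` whenever
`i + j = N + 1` (for `1 ≤ i,j ≤ N`). -/
theorem stmt2 (k V : Type) [Field k] [CharP k 2] [AddCommGroup V] [Module k V]
    (n N : ℕ) (hn : 0 < n) (hN : N = 2 * n)
    (e : ℕ → V) (he0 : e 0 = 0)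
    (hbasis : LinearIndependent k (fun i : Fin N => e (i.1 + 1)))
    (f : V →ₗ[k] V →ₗ[k] k)
    (hsymm : ∀ x y : V, f x y = f y x)
    (halt : ∀ x : V, f x x = 0)
    (h1 : f (e 1) (e N) = 1)
    (h2 : ∀ i : ℕ, n + 1 ≤ i → i ≤ N → f (e i) (e N) = 0)
    (h3 : ∀ i m : ℕ, i ≤ N - 1 → m ≤ N - 1 →
      f (e i) (e m) + f (e (i + 1)) (e m) + f (e i) (e (m + 1)) = 0) :
    ∀ i j : ℕ, 1 ≤ i → i ≤ N → 1 ≤ j → j ≤ N →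
      (i + j ≤ N → f (e i) (e j) = 0) ∧ (i + j = N + 1 → f (e i) (e j) = 1) := by
  have h2k : (2 : k) = 0 := by
    have := CharP.cast_eq_zero k 2
    simpa using this
  have key0 : ∀ i m : ℕ, i + m ≤ N → f (e i) (e m) = 0 := by
    intro i
    induction i with
    | zero => intro m _; rw [he0]; simp
    | succ i ih =>
      intro m h
      have r := h3 i m (by omega) (by omega)
      rw [ih m (by omega), ih (m + 1) (by omega)] at r
      simpa using r
  have key1 : ∀ i : ℕ, 1 ≤ i → i ≤ N → f (e i) (e (N + 1 - i)) = 1 := by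
    intro i
    induction i with
    | zero => omega
    | succ i ih =>
      intro _ hiN
      rcases Nat.eq_zero_or_pos i with h0 | h0
      · subst h0; simpa using h1
      · have hprev := ih h0 (by omega)
        have r := h3 i (N - i) (by omega) (by omega)
        rw [key0 i (N - i) (by omega)] at r
        have heq : N - i + 1 = N + 1 - i := by omega
        rw [heq, hprev] at r
        have heq2 : N + 1 - (i + 1) = N - i := by omega
        rw [heq2]
        linear_combination r - h2k
  intro i j hi1 hiN hj1 hjN
  refine ⟨fun h => key0 i j h, fun h => ?_⟩
  have hj : j = N + 1 - i := by omega
  rw [hj]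
  exact key1 i hi1 hiN
end

section
/- With V, f as in the previous setting (characteristic 2, dim V = 2n, f the unique v-invariant alternating form with the stated normalization), the conditions (2.5.1)–(2.5.3) determine f uniquely: any two alternating forms satisfying all three conditions are equal. -/
open Finset

/-- Key binomial identity (Vandermonde-style), at the natural-number level. -/
lemma keyId (n r u : ℕ) (hr1 : 1 ≤ r) (hrn : r ≤ n) (hu : u ≤ n + 1) :
    ∑ j ∈ Finset.range r,
      (r - 1).choose j * (if u ≤ 2 * r - j then (n + 1 - u).choose (2 * r - j - u) else 0)
      = (n + r - u).choose (n - r) := by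
  by_cases hcase : u ≤ 2 * r
  · -- main case
    have hsymm : (n + r - u).choose (n - r) = (n + r - u).choose (2 * r - u) := by
      rw [← Nat.choose_symm (show n - r ≤ n + r - u by omega)]
      congr 1
      omega
    rw [hsymm, show n + r - u = (r - 1) + (n + 1 - u) by omega, Nat.add_choose_eq,
      Finset.Nat.sum_antidiagonal_eq_sum_range_succ_mk]
    have h1 : ∑ j ∈ Finset.range r,
        (r - 1).choose j * (if u ≤ 2 * r - j then (n + 1 - u).choose (2 * r - j - u) else 0)
        = ∑ j ∈ Finset.range (r + (2 * r - u) + 1),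
        (r - 1).choose j * (if u ≤ 2 * r - j then (n + 1 - u).choose (2 * r - j - u) else 0) := by
      apply Finset.sum_subset (Finset.range_subset_range.mpr (by omega))
      intro j hj hj'
      have : r ≤ j := by
        simp only [Finset.mem_range] at hj'
        omega
      rw [Nat.choose_eq_zero_of_lt (by omega), Nat.zero_mul]
    rw [h1]
    have h2 : ∑ j ∈ Finset.range (r + (2 * r - u) + 1),
        (r - 1).choose j * (if u ≤ 2 * r - j then (n + 1 - u).choose (2 * r - j - u) else 0)
        = ∑ j ∈ Finset.range (2 * r - u + 1),
        (r - 1).choose j * (if u ≤ 2 * r - j then (n + 1 - u).choose (2 * r - j - u) else 0) := by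
      symm
      apply Finset.sum_subset (Finset.range_subset_range.mpr (by omega))
      intro j hj hj'
      simp only [Finset.mem_range] at hj hj'
      rcases Nat.eq_zero_or_pos u with hu0 | hu0
      · rw [Nat.choose_eq_zero_of_lt (by omega), Nat.zero_mul]
      · rw [if_neg (by omega), Nat.mul_zero]
    rw [h2]
    apply Finset.sum_congr rfl
    intro j hj
    simp only [Finset.mem_range] at hj
    rw [if_pos (by omega), show 2 * r - j - u = 2 * r - u - j from by omega]
  · -- u > 2r : both sides vanish
    have hz : ∑ j ∈ Finset.range r,
        (r - 1).choose j * (if u ≤ 2 * r - j then (n + 1 - u).choose (2 * r - j - u) else 0)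
        = 0 := by
      apply Finset.sum_eq_zero
      intro j hj
      rw [if_neg (by omega), Nat.mul_zero]
    rw [hz, Nat.choose_eq_zero_of_lt (by omega)]

/-- uniqueness.  With `V` of dimension `2n` over a field of
characteristic 2 with basis `e_1, …, e_{2n}` (so the `e_i`, `1 ≤ i ≤ 2n`,
span `V`; convention `e_0 = 0`), any two alternating bilinear forms
satisfying the conditions (2.5.1)–(2.5.3) are equal. -/
theorem stmt3 (k V : Type) [Field k] [CharP k 2] [AddCommGroup V] [Module k V]
    (n N : ℕ) (hn : 0 < n) (hN : N = 2 * n)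
    (e : ℕ → V) (he0 : e 0 = 0)
    (hspan : Submodule.span k (e '' Set.Icc 1 N) = ⊤)
    (f g : V →ₗ[k] V →ₗ[k] k)
    (hfsymm : ∀ x y : V, f x y = f y x) (hfalt : ∀ x : V, f x x = 0)
    (hgsymm : ∀ x y : V, g x y = g y x) (hgalt : ∀ x : V, g x x = 0)
    (hf1 : f (e 1) (e N) = 1)
    (hf2 : ∀ i : ℕ, n + 1 ≤ i → i ≤ N → f (e i) (e N) = 0)
    (hf3 : ∀ i m : ℕ, i ≤ N - 1 → m ≤ N - 1 →
      f (e i) (e m) + f (e (i + 1)) (e m) + f (e i) (e (m + 1)) = 0)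
    (hg1 : g (e 1) (e N) = 1)
    (hg2 : ∀ i : ℕ, n + 1 ≤ i → i ≤ N → g (e i) (e N) = 0)
    (hg3 : ∀ i m : ℕ, i ≤ N - 1 → m ≤ N - 1 →
      g (e i) (e m) + g (e (i + 1)) (e m) + g (e i) (e (m + 1)) = 0) :
    f = g := by
  have two0 : (2 : k) = 0 := CharTwo.two_eq_zero
  have addself : ∀ a : k, a + a = 0 := CharTwo.add_self_eq_zero
  set b : ℕ → ℕ → k := fun i m => f (e i) (e m) + g (e i) (e m) with hbdef
  have bsymm : ∀ i m, b i m = b m i := by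
    intro i m
    simp only [hbdef]
    rw [hfsymm (e i) (e m), hgsymm (e i) (e m)]
  have b0 : ∀ m, b 0 m = 0 := by
    intro m
    simp only [hbdef, he0, map_zero, LinearMap.zero_apply, add_zero]
  have b0' : ∀ i, b i 0 = 0 := fun i => by rw [bsymm]; exact b0 i
  have bdiag : ∀ i, b i i = 0 := by
    intro i
    simp only [hbdef, hfalt, hgalt, add_zero]
  have brec : ∀ i m, i ≤ N - 1 → m ≤ N - 1 → b i (m + 1) = b i m + b (i + 1) m := by
    intro i m hi hm
    have h1 := hf3 i m hi hm
    have h2 := hg3 i m hi hm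
    simp only [hbdef]
    linear_combination h1 + h2 -
      (f (e i) (e m) + g (e i) (e m) + f (e (i + 1)) (e m) + g (e (i + 1)) (e m)) * two0
  have bN1 : b 1 N = 0 := by
    simp only [hbdef]
    rw [hf1, hg1]
    exact addself 1
  have bNhi : ∀ i, n + 1 ≤ i → i ≤ N → b i N = 0 := by
    intro i h1 h2
    simp only [hbdef]
    rw [hf2 i h1 h2, hg2 i h1 h2, add_zero]
  set D : ℕ → k := fun u => b u N + b (u - 1) N with hDdef
  have D0 : D 0 = 0 := by
    show b 0 N + b (0 - 1) N = 0
    simp [b0]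
  have D1 : D 1 = 0 := by
    show b 1 N + b (1 - 1) N = 0
    simp [bN1, b0]
  have Dhi : ∀ u, n + 2 ≤ u → u ≤ N → D u = 0 := by
    intro u h1 h2
    simp only [hDdef]
    rw [bNhi u (by omega) h2, bNhi (u - 1) (by omega) (by omega), add_zero]
  -- the fundamental expansion
  have star : ∀ m, m ≤ N → ∀ i, i ≤ N →
      b i m = ∑ u ∈ Finset.range (m + 1), ((m - u).choose (N - i) : k) * D u := by
    intro m
    induction m with
    | zero =>
      intro _ i hi
      rw [Finset.sum_range_one, D0, mul_zero, b0']
    | succ m ih =>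
      intro hm1 i hi
      have hm : m ≤ N := by omega
      rcases Nat.lt_or_ge i N with hlt | hge
      · -- i < N : use the recursion
        have hrec := brec i m (by omega) (by omega)
        rw [hrec, ih hm i hi, ih hm (i + 1) (by omega)]
        rw [Finset.sum_range_succ (n := m + 1)]
        have hlast : ((m + 1 - (m + 1)).choose (N - i) : k) * D (m + 1) = 0 := by
          rw [Nat.sub_self, Nat.choose_eq_zero_of_lt (by omega), Nat.cast_zero, zero_mul]
        rw [hlast, add_zero, ← Finset.sum_add_distrib]
        apply Finset.sum_congr rfl
        intro u hu
        simp only [Finset.mem_range] at hu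
        have e1 : m + 1 - u = (m - u) + 1 := by omega
        have e2 : N - i = (N - (i + 1)) + 1 := by omega
        rw [e1, e2, Nat.choose_succ_succ]
        push_cast
        ring
      · -- i = N
        have hi' : i = N := le_antisymm hi hge
        rw [hi']
        simp only [Nat.sub_self, Nat.choose_zero_right, Nat.cast_one, one_mul]
        rw [Finset.sum_range_succ]
        have hD : D (m + 1) = b (m + 1) N + b m N := by
          simp only [hDdef, Nat.add_sub_cancel]
        have hb1 : b N (m + 1) = b m N + D (m + 1) := by
          rw [bsymm, hD]
          rw [add_comm (b (m + 1) N) (b m N), ← add_assoc, addself, zero_add]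
        rw [hb1]
        congr 1
        have := ih hm N le_rfl
        simp only [Nat.sub_self, Nat.choose_zero_right, Nat.cast_one, one_mul] at this
        rw [← this, bsymm]
  -- the alternating relations
  have Er : ∀ r, 1 ≤ r → r ≤ n →
      ∑ u ∈ Finset.range (n + 2), ((n + r - u).choose (n - r) : k) * D u = 0 := by
    intro r h1 h2
    have h3 := star (n + r) (by omega) (n + r) (by omega)
    rw [bdiag] at h3
    have hNr : N - (n + r) = n - r := by omega
    rw [hNr] at h3
    have h4 : ∑ u ∈ Finset.range (n + 2), ((n + r - u).choose (n - r) : k) * D u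
        = ∑ u ∈ Finset.range (n + r + 1), ((n + r - u).choose (n - r) : k) * D u := by
      apply Finset.sum_subset (Finset.range_subset_range.mpr (by omega))
      intro u hu hu'
      simp only [Finset.mem_range] at hu hu'
      rw [Dhi u (by omega) (by omega), mul_zero]
    rw [h4, ← h3]
  -- the triangularizing transform
  set w : ℕ → k := fun s => ∑ u ∈ Finset.range (n + 2),
      (if u ≤ s then ((n + 1 - u).choose (s - u) : k) else 0) * D u with hwdef
  have Tr : ∀ r, 1 ≤ r → r ≤ n →
      ∑ j ∈ Finset.range r, ((r - 1).choose j : k) * w (2 * r - j) = 0 := by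
    intro r h1 h2
    have hswap : ∑ j ∈ Finset.range r, ((r - 1).choose j : k) * w (2 * r - j)
        = ∑ u ∈ Finset.range (n + 2),
            (∑ j ∈ Finset.range r, ((r - 1).choose j : k) *
              (if u ≤ 2 * r - j then ((n + 1 - u).choose (2 * r - j - u) : k) else 0)) * D u := by
      simp only [hwdef, Finset.mul_sum]
      rw [Finset.sum_comm]
      simp only [Finset.sum_mul, mul_assoc]
    rw [hswap]
    have hcoef : ∀ u ∈ Finset.range (n + 2),
        (∑ j ∈ Finset.range r, ((r - 1).choose j : k) *
          (if u ≤ 2 * r - j then ((n + 1 - u).choose (2 * r - j - u) : k) else 0)) * D u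
        = ((n + r - u).choose (n - r) : k) * D u := by
      intro u hu
      simp only [Finset.mem_range] at hu
      congr 1
      rw [← keyId n r u h1 h2 (by omega)]
      push_cast [apply_ite (fun x : ℕ => (x : k))]
      ring
    rw [Finset.sum_congr rfl hcoef]
    exact Er r h1 h2
  have whi : ∀ s, n + 2 ≤ s → w s = 0 := by
    intro s hs
    simp only [hwdef]
    apply Finset.sum_eq_zero
    intro u hu
    simp only [Finset.mem_range] at hu
    rw [if_pos (by omega), Nat.choose_eq_zero_of_lt (by omega), Nat.cast_zero, zero_mul]
  have w0 : w 0 = 0 := by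
    simp only [hwdef]
    apply Finset.sum_eq_zero
    intro u hu
    rcases Nat.eq_zero_or_pos u with h | h
    · subst h; rw [D0, mul_zero]
    · rw [if_neg (by omega), zero_mul]
  have w1 : w 1 = 0 := by
    simp only [hwdef]
    apply Finset.sum_eq_zero
    intro u hu
    match u with
    | 0 => rw [D0, mul_zero]
    | 1 => rw [D1, mul_zero]
    | (v + 2) => rw [if_neg (by omega), zero_mul]
  -- downward induction killing all w s for s ≥ 2
  have wvan : ∀ s, 2 ≤ s → w s = 0 := by
    have aux : ∀ t s, 2 ≤ s → n + 2 ≤ s + t → w s = 0 := by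
      intro t
      induction t with
      | zero =>
        intro s h2 hst
        exact whi s (by omega)
      | succ t ih =>
        intro s h2 hst
        by_cases hcase : n + 2 ≤ s + t
        · exact ih s h2 hcase
        · have hs_le : s ≤ n + 1 := by omega
          have hT := Tr (s - 1) (by omega) (by omega)
          have hsplit : s - 1 = (s - 2) + 1 := by omega
          rw [hsplit, Finset.sum_range_succ] at hT
          simp only [Nat.add_sub_cancel] at hT
          have h2s : 2 * ((s - 2) + 1) - (s - 2) = s := by omega
          rw [h2s, Nat.choose_self, Nat.cast_one, one_mul] at hT
          have hz : ∑ j ∈ Finset.range (s - 2),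
              ((s - 2).choose j : k) * w (2 * ((s - 2) + 1) - j) = 0 := by
            apply Finset.sum_eq_zero
            intro j hj
            simp only [Finset.mem_range] at hj
            rw [ih (2 * ((s - 2) + 1) - j) (by omega) (by omega), mul_zero]
          rw [hz, zero_add] at hT
          exact hT
    intro s h2
    exact aux (n + 2) s h2 (by omega)
  -- conclude D vanishes on [0, n+1] by (upward) strong induction
  have Dvan : ∀ v, v ≤ n + 1 → D v = 0 := by
    intro v
    induction v using Nat.strong_induction_on with
    | _ v ihv =>
      intro hv
      match v, hv with
      | 0, _ => exact D0
      | 1, _ => exact D1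
      | (v + 2), hv =>
        have hwv : w (v + 2) = 0 := wvan (v + 2) (by omega)
        have hsum : ∑ u ∈ Finset.range (n + 2),
            (if u ≤ v + 2 then ((n + 1 - u).choose (v + 2 - u) : k) else 0) * D u
            = D (v + 2) := by
          rw [Finset.sum_eq_single (v + 2)]
          · rw [if_pos le_rfl, Nat.sub_self, Nat.choose_zero_right, Nat.cast_one, one_mul]
          · intro u hu hne
            simp only [Finset.mem_range] at hu
            rcases Nat.lt_or_ge u (v + 2) with hlt | hge
            · rw [ihv u hlt (by omega), mul_zero]
            · rw [if_neg (by omega), zero_mul]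
          · intro habs
            exact absurd (Finset.mem_range.mpr (by omega)) habs
        have hwD : w (v + 2) = D (v + 2) := by
          simp only [hwdef]
          exact hsum
        rw [← hwD]
        exact hwv

  have Dall : ∀ u, u ≤ N → D u = 0 := by
    intro u hu
    rcases le_or_gt u (n + 1) with h | h
    · exact Dvan u h
    · exact Dhi u (by omega) hu
  have ball : ∀ i m, i ≤ N → m ≤ N → b i m = 0 := by
    intro i m hi hm
    rw [star m hm i hi]
    apply Finset.sum_eq_zero
    intro u hu
    simp only [Finset.mem_range] at hu
    rw [Dall u (by omega), mul_zero]
  -- conclude using the spanning hypothesis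
  apply LinearMap.ext_on hspan
  rintro x ⟨i, hi, rfl⟩
  apply LinearMap.ext_on hspan
  rintro y ⟨j, hj, rfl⟩
  have hij : b i j = 0 := ball i j hi.2 hj.2
  simp only [hbdef] at hij
  show f (e i) (e j) = g (e i) (e j)
  linear_combination hij - g (e i) (e j) * two0
end

section
/- Let V be a 2n-dimensional vector space over a field k of characteristic 2 with basis e_1,…,e_N (N=2n), v the unipotent transformation with (v-1)e_j = e_{j-1}, and f the unique v-invariant alternating form as above. If Q is a quadratic form on V with Q(x+y)+Q(x)+Q(y) = f(x,y) for all x,y, invariant under v, and Q(e_N)=0, then Q is uniquely determined; moreover Q(e_i) = f(e_i, e_{i+1}) for 1 ≤ i ≤ N-1, so that Q(e_i)=0 for i ≠ n and Q(e_n)=1. -/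
/-- `V` a `2n`-dimensional space over a field `k` of characteristic 2
with basis `e_1, …, e_N` (`N = 2n`, convention `e_0 = 0`), `v` the unipotent map
with `(v-1)e_j = e_{j-1}`, and `f` the unique `v`-invariant alternating form as
above (with `f(e_i,e_j) = 0` for `i+j ≤ N`, `= 1` for `i+j = N+1`, and `= 0` for
`n+1 ≤ i,j ≤ N`).  If `Q` is a quadratic form polarizing to `f`, invariant under
`v`, with `Q(e_N) = 0`, then `Q` is uniquely determined, `Q(e_i) = f(e_i,e_{i+1})`
for `1 ≤ i ≤ N-1`, and consequently `Q(e_i) = 0` for `i ≠ n` and `Q(e_n) = 1`. -/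
theorem stmt4 (k V : Type) [Field k] [CharP k 2] [AddCommGroup V] [Module k V]
    (n N : ℕ) (hn : 0 < n) (hN : N = 2 * n)
    (e : ℕ → V) (he0 : e 0 = 0)
    (hspan : Submodule.span k (e '' Set.Icc 1 N) = ⊤)
    (f : V →ₗ[k] V →ₗ[k] k)
    (hf0 : ∀ i j : ℕ, 1 ≤ i → i ≤ N → 1 ≤ j → j ≤ N → i + j ≤ N → f (e i) (e j) = 0)
    (hf1 : ∀ i j : ℕ, 1 ≤ i → i ≤ N → 1 ≤ j → j ≤ N → i + j = N + 1 → f (e i) (e j) = 1)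
    (hf2 : ∀ i j : ℕ, n + 1 ≤ i → i ≤ N → n + 1 ≤ j → j ≤ N → f (e i) (e j) = 0)
    (v : V →ₗ[k] V) (hv : ∀ j : ℕ, 1 ≤ j → j ≤ N → v (e j) = e j + e (j - 1))
    (Q : QuadraticForm k V)
    (hpol : ∀ x y : V, QuadraticMap.polar Q x y = f x y)
    (hQv : ∀ x : V, Q (v x) = Q x)
    (hQN : Q (e N) = 0) :
    (∀ i : ℕ, 1 ≤ i → i ≤ N - 1 → Q (e i) = f (e i) (e (i + 1))) ∧
    (∀ i : ℕ, 1 ≤ i → i ≤ N → i ≠ n → Q (e i) = 0) ∧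
    Q (e n) = 1 ∧
    (∀ Q' : QuadraticForm k V,
      (∀ x y : V, QuadraticMap.polar Q' x y = f x y) →
      (∀ x : V, Q' (v x) = Q' x) → Q' (e N) = 0 → Q' = Q) := by
  have hsym : ∀ x y : V, f x y = f y x := by
    intro x y
    rw [← hpol, ← hpol, QuadraticMap.polar_comm]
  have key : ∀ (Q' : QuadraticForm k V),
      (∀ x y : V, QuadraticMap.polar Q' x y = f x y) →
      (∀ x : V, Q' (v x) = Q' x) →
      ∀ i : ℕ, 1 ≤ i → i + 1 ≤ N → Q' (e i) = f (e i) (e (i + 1)) := by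
    intro Q' hp hqv i h1 h2
    have hv' := hv (i + 1) (by omega) h2
    simp only [Nat.add_sub_cancel] at hv'
    have h := hqv (e (i + 1))
    rw [hv'] at h
    have hpol' := hp (e (i + 1)) (e i)
    rw [QuadraticMap.polar] at hpol'
    have : Q' (e i) = - f (e (i + 1)) (e i) := by linear_combination h - hpol'
    rw [this, CharTwo.neg_eq, hsym]
  have fval : ∀ i : ℕ, 1 ≤ i → i + 1 ≤ N →
      f (e i) (e (i + 1)) = if i = n then 1 else 0 := by
    intro i h1 h2
    rcases lt_trichotomy i n with h | h | h
    · rw [if_neg (by omega)]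
      exact hf0 i (i + 1) h1 (by omega) (by omega) h2 (by omega)
    · rw [if_pos h]
      exact hf1 i (i + 1) h1 (by omega) (by omega) h2 (by omega)
    · rw [if_neg (by omega)]
      exact hf2 i (i + 1) (by omega) (by omega) (by omega) h2
  have val : ∀ (Q' : QuadraticForm k V),
      (∀ x y : V, QuadraticMap.polar Q' x y = f x y) →
      (∀ x : V, Q' (v x) = Q' x) → Q' (e N) = 0 →
      ∀ i : ℕ, 1 ≤ i → i ≤ N → Q' (e i) = if i = n then 1 else 0 := by
    intro Q' hp hqv hqn i h1 h2
    rcases eq_or_lt_of_le h2 with rfl | hlt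
    · rw [if_neg (by omega), hqn]
    · rw [key Q' hp hqv i h1 (by omega), fval i h1 (by omega)]
  refine ⟨fun i h1 h2 => key Q hpol hQv i h1 (by omega), ?_, ?_, ?_⟩
  · intro i h1 h2 hne
    rw [val Q hpol hQv hQN i h1 h2, if_neg hne]
  · rw [val Q hpol hQv hQN n hn (by omega), if_pos rfl]
  · intro Q' hp' hqv' hqn'
    have hall : ∀ x ∈ Submodule.span k (e '' Set.Icc 1 N), Q' x = Q x := by
      intro x hx
      induction hx using Submodule.span_induction with
      | mem x hx =>
        obtain ⟨i, ⟨hi1, hi2⟩, rfl⟩ := hx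
        rw [val Q' hp' hqv' hqn' i hi1 hi2, val Q hpol hQv hQN i hi1 hi2]
      | zero => simp
      | add x y hx hy ihx ihy =>
        have h1 := hp' x y
        have h2 := hpol x y
        rw [QuadraticMap.polar] at h1 h2
        linear_combination h1 - h2 + ihx + ihy
      | smul a x hx ihx =>
        rw [QuadraticMap.map_smul, QuadraticMap.map_smul, ihx]
    ext x
    exact hall x (by rw [hspan]; trivial)
end

section
/- Let λ = (λ_1 ≤ λ_2 ≤ … ≤ λ_{2m}) be a partition of 2n in which every odd part occurs with even multiplicity. Define ν_i = λ_i/2 + i if λ_i is even (a singleton block), and ν_i = ν_{i+1} = (λ_i+1)/2 + i if {λ_i, λ_{i+1}} is a pair block of equal odd parts (odd parts paired consecutively). Set A = {0, ν_2, ν_4, …, ν_{2m}} and B = {ν_1, ν_3, …, ν_{2m-1}}. Then (A,B) is a distinguished symbol: writing A = {a_1 < … < a_{m+1}}, B = {b_1 < … < b_m}, we have a_1 ≤ b_1 ≤ a_2 ≤ b_2 ≤ … ≤ b_m ≤ a_{m+1}, consecutive elements within A differ by at least 2, consecutive elements within B differ by at least 2, and b_1 ≥ 1; moreover Σa_i +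 Σb_i = n + (2m+1)(2m)/2. -/
/-- The entries `ν_i` of the symbol attached to a partition `λ` of `2n`
(indexed `1 ≤ i ≤ 2m`, odd parts paired consecutively): if `λ_i` is even then
`ν_i = λ_i/2 + i`; if `λ_i` is odd and `i` is the first index of its pair
(an even number of earlier indices carry the same part) then
`ν_i = (λ_i+1)/2 + i`; if `i` is the second index of its pair then
`ν_i = (λ_i+1)/2 + (i-1)`, so `ν_i = ν_{i-1}` matching `ν_i = ν_{i+1} = (λ_i+1)/2 + i`
for the first index `i` of the pair. -/
def nuFn (lam : ℕ → ℕ) (i : ℕ) : ℕ :=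
  if Even (lam i) then lam i / 2 + i
  else if Even (((Finset.Icc 1 (i - 1)).filter (fun j => lam j = lam i)).card) then
    (lam i + 1) / 2 + i
  else (lam i + 1) / 2 + (i - 1)

namespace Stmt8Aux

/-- Number of earlier indices with the same part. -/
def cnt (lam : ℕ → ℕ) (i : ℕ) : ℕ :=
  ((Finset.Icc 1 (i - 1)).filter (fun j => lam j = lam i)).card

/-- Indicator of `i` being a second index of a pair. -/
def secInd (lam : ℕ → ℕ) (i : ℕ) : ℕ :=
  if Even (lam i) then 0 else if Even (cnt lam i) then 0 else 1

lemma secInd_le_one (lam : ℕ → ℕ) (i : ℕ) : secInd lam i ≤ 1 := by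
  unfold secInd; split_ifs <;> omega

lemma secInd_eq_one (lam : ℕ → ℕ) (i : ℕ) :
    secInd lam i = 1 ↔ ¬Even (lam i) ∧ ¬Even (cnt lam i) := by
  unfold secInd; split_ifs <;> simp_all

lemma nu_spec (lam : ℕ → ℕ) (i : ℕ) (hi : 1 ≤ i) :
    nuFn lam i + secInd lam i = (lam i + 1) / 2 + i := by
  unfold nuFn secInd cnt
  split_ifs with h1 h2
  · rw [Nat.even_iff] at h1; omega
  · omega
  · omega

lemma cnt_succ (lam : ℕ → ℕ) (i : ℕ) (hi : 1 ≤ i) (h : lam (i + 1) = lam i) :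
    cnt lam (i + 1) = cnt lam i + 1 := by
  unfold cnt
  rw [show i + 1 - 1 = i from rfl, h]
  have h2 : Finset.Icc 1 i = insert i (Finset.Icc 1 (i - 1)) := by
    ext j
    simp only [Finset.mem_Icc, Finset.mem_insert]
    omega
  rw [h2, Finset.filter_insert, if_pos rfl, Finset.card_insert_of_notMem]
  intro hmem
  have := Finset.mem_Icc.mp (Finset.mem_filter.mp hmem).1
  omega

lemma partner (m : ℕ) (lam : ℕ → ℕ)
    (hmono : ∀ i j : ℕ, 1 ≤ i → i ≤ j → j ≤ 2 * m → lam i ≤ lam j)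
    (hodd : ∀ h : ℕ, Odd h →
      Even (((Finset.Icc 1 (2 * m)).filter (fun i => lam i = h)).card))
    (i : ℕ) (h1 : 1 ≤ i) (h2 : i ≤ 2 * m)
    (hoi : ¬Even (lam i)) (hci : Even (cnt lam i)) :
    i + 1 ≤ 2 * m ∧ lam (i + 1) = lam i := by
  have ht : Even (((Finset.Icc 1 (2 * m)).filter (fun j => lam j = lam i)).card) :=
    hodd (lam i) (Nat.odd_iff.mpr (by rw [Nat.even_iff] at hoi; omega))
  have hsplit : Finset.Icc 1 (2 * m) = Finset.Icc 1 (i - 1) ∪ Finset.Icc i (2 * m) := by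
    ext j
    simp only [Finset.mem_Icc, Finset.mem_union]
    omega
  have hdisj : Disjoint ((Finset.Icc 1 (i - 1)).filter (fun j => lam j = lam i))
      ((Finset.Icc i (2 * m)).filter (fun j => lam j = lam i)) := by
    rw [Finset.disjoint_left]
    intro a ha hb
    have ha' := Finset.mem_Icc.mp (Finset.mem_filter.mp ha).1
    have hb' := Finset.mem_Icc.mp (Finset.mem_filter.mp hb).1
    omega
  rw [hsplit, Finset.filter_union, Finset.card_union_of_disjoint hdisj] at ht
  have hcnt_eq : ((Finset.Icc 1 (i - 1)).filter (fun j => lam j = lam i)).card = cnt lam i := rfl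
  rw [hcnt_eq] at ht
  have hir : i ∈ (Finset.Icc i (2 * m)).filter (fun j => lam j = lam i) :=
    Finset.mem_filter.mpr ⟨Finset.mem_Icc.mpr ⟨le_refl i, h2⟩, rfl⟩
  have hr1 : 1 ≤ ((Finset.Icc i (2 * m)).filter (fun j => lam j = lam i)).card :=
    Finset.card_pos.mpr ⟨i, hir⟩
  have hr2 : 1 < ((Finset.Icc i (2 * m)).filter (fun j => lam j = lam i)).card := by
    rw [Nat.even_iff] at ht hci
    omega
  obtain ⟨j, hj, hji⟩ := Finset.exists_mem_ne hr2 i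
  obtain ⟨hjmem, hjval⟩ := Finset.mem_filter.mp hj
  obtain ⟨hji', hj2m⟩ := Finset.mem_Icc.mp hjmem
  have hij : i + 1 ≤ j := by omega
  refine ⟨by omega, ?_⟩
  have l1 := hmono i (i + 1) h1 (by omega) (by omega)
  have l2 := hmono (i + 1) j (by omega) hij hj2m
  omega

lemma prev (m : ℕ) (lam : ℕ → ℕ)
    (hmono : ∀ i j : ℕ, 1 ≤ i → i ≤ j → j ≤ 2 * m → lam i ≤ lam j)
    (i : ℕ) (h1 : 1 ≤ i) (h2 : i ≤ 2 * m) (hci : ¬Even (cnt lam i)) :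
    2 ≤ i ∧ lam (i - 1) = lam i := by
  have hpos : 0 < cnt lam i := by rw [Nat.even_iff] at hci; omega
  have hne : ((Finset.Icc 1 (i - 1)).filter (fun j => lam j = lam i)).Nonempty :=
    Finset.card_pos.mp hpos
  obtain ⟨j, hj⟩ := hne
  obtain ⟨hjmem, hjval⟩ := Finset.mem_filter.mp hj
  obtain ⟨hj1, hj2⟩ := Finset.mem_Icc.mp hjmem
  have h2i : 2 ≤ i := by omega
  have l1 := hmono j (i - 1) hj1 hj2 (by omega)
  have l2 := hmono (i - 1) i (by omega) (by omega) h2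
  exact ⟨h2i, by omega⟩

lemma gap (m : ℕ) (lam : ℕ → ℕ)
    (hmono : ∀ i j : ℕ, 1 ≤ i → i ≤ j → j ≤ 2 * m → lam i ≤ lam j)
    (j : ℕ) (hj : 1 ≤ j) (hj2 : j + 2 ≤ 2 * m) :
    nuFn lam j + 2 ≤ nuFn lam (j + 2) := by
  have h1 := nu_spec lam j hj
  have h2 := nu_spec lam (j + 2) (by omega)
  have hs1 : secInd lam j ≤ 1 := secInd_le_one lam j
  have hs2 : secInd lam (j + 2) ≤ 1 := secInd_le_one lam (j + 2)
  have hmono1 : lam j ≤ lam (j + 1) := hmono j (j + 1) hj (by omega) (by omega)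
  have hmono2 : lam (j + 1) ≤ lam (j + 2) := hmono (j + 1) (j + 2) (by omega) (by omega) (by omega)
  have hqm : (lam j + 1) / 2 ≤ (lam (j + 2) + 1) / 2 :=
    Nat.div_le_div_right (by omega)
  by_cases hA : secInd lam (j + 2) = 1
  · by_cases hB : secInd lam j = 1
    · omega
    · -- hard case: need (lam j + 1)/2 + 1 ≤ (lam (j+2) + 1)/2
      obtain ⟨ho2, hc2⟩ := (secInd_eq_one lam (j + 2)).mp hA
      have hkey : (lam j + 1) / 2 + 1 ≤ (lam (j + 2) + 1) / 2 := by
        by_cases heq : lam (j + 2) = lam j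
        · exfalso
          have e1 : lam (j + 1) = lam j := by omega
          have e2 : lam (j + 2) = lam (j + 1) := by omega
          have c1 : cnt lam (j + 1) = cnt lam j + 1 := cnt_succ lam j hj e1
          have c2 : cnt lam (j + 2) = cnt lam (j + 1) + 1 := cnt_succ lam (j + 1) (by omega) e2
          refine hB ((secInd_eq_one lam j).mpr ⟨heq ▸ ho2, ?_⟩)
          rw [Nat.even_iff] at hc2 ⊢
          omega
        · have ho2' : lam (j + 2) % 2 = 1 := by rw [Nat.even_iff] at ho2; omega
          omega
      omega
  · omega

lemma gauss : ∀ k : ℕ, 2 * ∑ i ∈ Finset.Icc 1 k, i = k * (k + 1) := by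
  intro k
  induction k with
  | zero => simp
  | succ k ih =>
    rw [Finset.sum_Icc_succ_top (by omega : 1 ≤ k + 1), Nat.mul_add, ih]
    ring

end Stmt8Aux

open Stmt8Aux in
/-- For a partition `λ = (λ_1 ≤ … ≤ λ_{2m})` of `2n` in which every
odd part occurs with even multiplicity, the pair `A = {0, ν_2, ν_4, …, ν_{2m}}`,
`B = {ν_1, ν_3, …, ν_{2m-1}}` is a distinguished symbol: the entries interleave
(`ν` is monotone and `0 ≤ ν_1`), consecutive entries within `A` and within `B`
differ by at least 2, `b_1 = ν_1 ≥ 1`, and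
`Σ a + Σ b = Σ_{i=1}^{2m} ν_i = n + (2m+1)(2m)/2 = n + m(2m+1)`. -/
theorem stmt8 (m n : ℕ) (hm : 0 < m) (lam : ℕ → ℕ)
    (hmono : ∀ i j : ℕ, 1 ≤ i → i ≤ j → j ≤ 2 * m → lam i ≤ lam j)
    (hsum : ∑ i ∈ Finset.Icc 1 (2 * m), lam i = 2 * n)
    (hodd : ∀ h : ℕ, Odd h →
      Even (((Finset.Icc 1 (2 * m)).filter (fun i => lam i = h)).card)) :
    1 ≤ nuFn lam 1 ∧
    (∀ i : ℕ, 1 ≤ i → i < 2 * m → nuFn lam i ≤ nuFn lam (i + 1)) ∧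
    2 ≤ nuFn lam 2 ∧
    (∀ i : ℕ, 1 ≤ i → i + 1 ≤ m → nuFn lam (2 * i) + 2 ≤ nuFn lam (2 * i + 2)) ∧
    (∀ i : ℕ, 1 ≤ i → i + 1 ≤ m → nuFn lam (2 * i - 1) + 2 ≤ nuFn lam (2 * i + 1)) ∧
    (∑ i ∈ Finset.Icc 1 (2 * m), nuFn lam i = n + m * (2 * m + 1)) := by
  refine ⟨?_, ?_, ?_, ?_, ?_, ?_⟩
  · -- 1 ≤ ν_1
    have hspec := nu_spec lam 1 le_rfl
    have h0 : cnt lam 1 = 0 := by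
      unfold cnt
      rw [show (1 : ℕ) - 1 = 0 from rfl, Finset.Icc_eq_empty (by omega)]
      simp
    have hs1 : secInd lam 1 = 0 := by
      unfold secInd
      rw [h0]
      split_ifs with a b
      · rfl
      · rfl
      · exact absurd Even.zero b
    omega
  · -- monotone
    intro i hi hlt
    have h1 := nu_spec lam i hi
    have h2 := nu_spec lam (i + 1) (by omega)
    have hq : (lam i + 1) / 2 ≤ (lam (i + 1) + 1) / 2 :=
      Nat.div_le_div_right (by have := hmono i (i + 1) hi (by omega) (by omega); omega)
    have hb1 := secInd_le_one lam i
    have hb2 := secInd_le_one lam (i + 1)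
    omega
  · -- 2 ≤ ν_2
    have hspec := nu_spec lam 2 (by omega)
    rcases eq_or_ne (secInd lam 2) 1 with h | h
    · obtain ⟨ho, -⟩ := (secInd_eq_one lam 2).mp h
      rw [Nat.even_iff] at ho
      omega
    · have := secInd_le_one lam 2
      omega
  · -- gaps in A
    intro i hi him
    exact gap m lam hmono (2 * i) (by omega) (by omega)
  · -- gaps in B
    intro i hi him
    have h := gap m lam hmono (2 * i - 1) (by omega) (by omega)
    rwa [show 2 * i - 1 + 2 = 2 * i + 1 by omega] at h
  · -- the sum
    set I := Finset.Icc 1 (2 * m) with hI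
    have key : ∀ i ∈ I, nuFn lam i + secInd lam i = (lam i + 1) / 2 + i := fun i hi =>
      nu_spec lam i (Finset.mem_Icc.mp hi).1
    have hsum1 : (∑ i ∈ I, nuFn lam i) + (∑ i ∈ I, secInd lam i)
        = (∑ i ∈ I, (lam i + 1) / 2) + (∑ i ∈ I, i) := by
      rw [← Finset.sum_add_distrib, ← Finset.sum_add_distrib]
      exact Finset.sum_congr rfl key
    classical
    set S := I.filter (fun i => ¬Even (lam i) ∧ ¬Even (cnt lam i)) with hS
    set T := I.filter (fun i => ¬Even (lam i) ∧ Even (cnt lam i)) with hT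
    set O := I.filter (fun i => ¬Even (lam i)) with hO
    have hsec : ∑ i ∈ I, secInd lam i = S.card := by
      rw [hS, Finset.card_filter]
      refine Finset.sum_congr rfl fun i _ => ?_
      unfold secInd
      by_cases h1 : Even (lam i) <;> by_cases h2 : Even (cnt lam i) <;> simp [h1, h2]
    have hq2 : 2 * (∑ i ∈ I, (lam i + 1) / 2) = 2 * n + O.card := by
      rw [Finset.mul_sum, hO, Finset.card_filter, ← hsum, ← Finset.sum_add_distrib]
      refine Finset.sum_congr rfl fun i _ => ?_
      by_cases h : Even (lam i)
      · rw [if_neg (not_not_intro h)]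
        rw [Nat.even_iff] at h
        omega
      · rw [if_pos h]
        rw [Nat.even_iff] at h
        omega
    have hOST : O.card = S.card + T.card := by
      rw [hS, hT, hO, Finset.card_filter, Finset.card_filter, Finset.card_filter,
        ← Finset.sum_add_distrib]
      refine Finset.sum_congr rfl fun i _ => ?_
      by_cases h1 : Even (lam i) <;> by_cases h2 : Even (cnt lam i) <;> simp [h1, h2]
    have hTS : T.card = S.card := by
      apply Finset.card_bij (fun a _ => a + 1)
      · intro a ha
        rw [hT, Finset.mem_filter, Finset.mem_Icc] at ha
        obtain ⟨⟨ha1, ha2⟩, hod, hev⟩ := ha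
        obtain ⟨hlt, heq⟩ := partner m lam hmono hodd a ha1 ha2 hod hev
        rw [hS, Finset.mem_filter, Finset.mem_Icc]
        refine ⟨⟨by omega, hlt⟩, by rwa [heq], ?_⟩
        rw [cnt_succ lam a ha1 heq]
        rw [Nat.even_iff] at hev ⊢
        omega
      · intro a₁ h₁ a₂ h₂ h
        omega
      · intro b hb
        rw [hS, Finset.mem_filter, Finset.mem_Icc] at hb
        obtain ⟨⟨hb1, hb2⟩, hod, hcnt⟩ := hb
        obtain ⟨hb2', heq⟩ := prev m lam hmono b hb1 hb2 hcnt
        refine ⟨b - 1, ?_, by omega⟩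
        have hc : cnt lam b = cnt lam (b - 1) + 1 := by
          have := cnt_succ lam (b - 1) (by omega)
            (by rw [show b - 1 + 1 = b by omega]; exact heq.symm)
          rwa [show b - 1 + 1 = b by omega] at this
        rw [hT, Finset.mem_filter, Finset.mem_Icc]
        refine ⟨⟨by omega, by omega⟩, by rwa [heq], ?_⟩
        rw [Nat.even_iff] at hcnt ⊢
        omega
    have hgauss : ∑ i ∈ I, i = m * (2 * m + 1) := by
      have h := gauss (2 * m)
      have h2 : 2 * m * (2 * m + 1) = 2 * (m * (2 * m + 1)) := by ring
      rw [hI]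
      exact Nat.eq_of_mul_eq_mul_left two_pos (by rw [h, h2])
    rw [hgauss] at hsum1
    set M := m * (2 * m + 1) with hM
    clear_value M
    omega
end

section
/- The map of the previous statement, sending a partition λ of 2n in which every odd part has even multiplicity to its distinguished symbol (A,B), is injective: distinct such partitions yield distinct (equivalence classes of) symbols. -/
lemma filter_Icc_succ_card (p : ℕ → Prop) [DecidablePred p] (k : ℕ) (hp : p (k+1)) :
    ((Finset.Icc 1 (k+1)).filter p).card = ((Finset.Icc 1 k).filter p).card + 1 := by
  have h : Finset.Icc 1 (k+1) = insert (k+1) (Finset.Icc 1 k) := by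
    ext x; simp only [Finset.mem_Icc, Finset.mem_insert]; omega
  rw [h, Finset.filter_insert, if_pos hp, Finset.card_insert_of_notMem]
  simp [Finset.mem_filter, Finset.mem_Icc]

/-- The hard case: if `mu i` is odd, `mu i < lam i`, and the number of indices
`j ≤ i` with `mu j = mu i` is odd, we get a contradiction (using the even
multiplicity of odd parts of `mu`). -/
lemma hardcase (m i : ℕ) (lam mu : ℕ → ℕ)
    (hmono : ∀ i j : ℕ, 1 ≤ i → i ≤ j → j ≤ 2 * m → lam i ≤ lam j)
    (hmono' : ∀ i j : ℕ, 1 ≤ i → i ≤ j → j ≤ 2 * m → mu i ≤ mu j)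
    (hodd' : ∀ h : ℕ, Odd h →
      Even (((Finset.Icc 1 (2 * m)).filter (fun j => mu j = h)).card))
    (hnu : ∀ i : ℕ, 1 ≤ i → i ≤ 2 * m → nuFn lam i = nuFn mu i)
    (h1 : 1 ≤ i) (h2 : i ≤ 2 * m)
    (hbo : Odd (mu i))
    (hgt : mu i < lam i)
    (hCodd : ¬ Even (((Finset.Icc 1 i).filter (fun j => mu j = mu i)).card)) : False := by
  have htot := hodd' (mu i) hbo
  have hsplit : Finset.Icc 1 (2 * m) = Finset.Icc 1 i ∪ Finset.Ioc i (2 * m) := by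
    ext x
    simp only [Finset.mem_Icc, Finset.mem_union, Finset.mem_Ioc]
    omega
  have hdisj : Disjoint (Finset.Icc 1 i) (Finset.Ioc i (2 * m)) := by
    rw [Finset.disjoint_left]
    intro a ha hb
    simp only [Finset.mem_Icc] at ha
    simp only [Finset.mem_Ioc] at hb
    omega
  rw [hsplit, Finset.filter_union,
    Finset.card_union_of_disjoint (Finset.disjoint_filter_filter hdisj)] at htot
  have h2odd : ¬ Even (((Finset.Ioc i (2 * m)).filter (fun j => mu j = mu i)).card) := by
    intro h
    exact hCodd (by rcases h with ⟨a, ha⟩; rcases htot with ⟨b, hb⟩; exact ⟨b - a, by omega⟩)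
  have hne : ((Finset.Ioc i (2 * m)).filter (fun j => mu j = mu i)).Nonempty := by
    rw [Finset.nonempty_iff_ne_empty]
    intro h
    exact h2odd (by rw [h]; simp)
  obtain ⟨j, hj⟩ := hne
  simp only [Finset.mem_filter, Finset.mem_Ioc] at hj
  obtain ⟨⟨hij, hjm⟩, hjval⟩ := hj
  have hsucc : i + 1 ≤ 2 * m := by omega
  have hmu1 : mu (i+1) = mu i := by
    have ha := hmono' i (i+1) h1 (by omega) hsucc
    have hb := hmono' (i+1) j (by omega) (by omega) hjm
    omega
  -- compute nuFn mu (i+1)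
  have hnum : nuFn mu (i+1) = (mu i + 1) / 2 + i := by
    unfold nuFn
    rw [if_neg (by rw [hmu1]; exact Nat.not_even_iff_odd.mpr hbo)]
    simp only [Nat.add_sub_cancel, hmu1]
    rw [if_neg hCodd]
  have hnul := hnu (i+1) (by omega) hsucc
  rw [hnum] at hnul
  have hle : lam i ≤ lam (i+1) := hmono i (i+1) h1 (by omega) hsucc
  obtain ⟨c, hc⟩ := hbo
  unfold nuFn at hnul
  by_cases hA : Even (lam (i+1))
  · rw [if_pos hA] at hnul
    obtain ⟨d, hd⟩ := hA
    omega
  · rw [if_neg hA] at hnul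
    rw [Nat.even_iff] at hA
    by_cases hB : Even (((Finset.Icc 1 (i + 1 - 1)).filter (fun j => lam j = lam (i+1))).card)
    · rw [if_pos hB] at hnul; omega
    · rw [if_neg hB] at hnul; omega

/-- The map `λ ↦ (A,B)` of Statement 8 is injective: two partitions
of `2n` (written with `2m` parts, weakly increasing, all odd parts of even
multiplicity) having the same distinguished symbol, i.e. the same entries
`ν_i` for `1 ≤ i ≤ 2m`, are equal. -/
theorem stmt9 (m n : ℕ) (hm : 0 < m) (lam mu : ℕ → ℕ)
    (hmono : ∀ i j : ℕ, 1 ≤ i → i ≤ j → j ≤ 2 * m → lam i ≤ lam j)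
    (hsum : ∑ i ∈ Finset.Icc 1 (2 * m), lam i = 2 * n)
    (hodd : ∀ h : ℕ, Odd h →
      Even (((Finset.Icc 1 (2 * m)).filter (fun i => lam i = h)).card))
    (hmono' : ∀ i j : ℕ, 1 ≤ i → i ≤ j → j ≤ 2 * m → mu i ≤ mu j)
    (hsum' : ∑ i ∈ Finset.Icc 1 (2 * m), mu i = 2 * n)
    (hodd' : ∀ h : ℕ, Odd h →
      Even (((Finset.Icc 1 (2 * m)).filter (fun i => mu i = h)).card))
    (hnu : ∀ i : ℕ, 1 ≤ i → i ≤ 2 * m → nuFn lam i = nuFn mu i) :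
    ∀ i : ℕ, 1 ≤ i → i ≤ 2 * m → lam i = mu i := by
  intro i
  induction i using Nat.strong_induction_on with
  | _ i ih =>
    intro h1 h2
    have heq : ∀ j, 1 ≤ j → j < i → lam j = mu j := fun j hj1 hj2 =>
      ih j hj2 hj1 (by omega)
    obtain ⟨k, rfl⟩ : ∃ k, i = k + 1 := ⟨i - 1, by omega⟩
    -- if the two values differ with the larger one `v`, the count of earlier
    -- indices of value `v` is zero
    have hzl : lam (k+1) < mu (k+1) →
        ((Finset.Icc 1 k).filter (fun j => mu j = mu (k+1))).card = 0 := by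
      intro hlt
      rw [Finset.card_eq_zero, Finset.filter_eq_empty_iff]
      intro j hj
      simp only [Finset.mem_Icc] at hj
      have h3 := heq j hj.1 (by omega)
      have h4 := hmono j (k+1) hj.1 (by omega) h2
      omega
    have hzm : mu (k+1) < lam (k+1) →
        ((Finset.Icc 1 k).filter (fun j => lam j = lam (k+1))).card = 0 := by
      intro hlt
      rw [Finset.card_eq_zero, Finset.filter_eq_empty_iff]
      intro j hj
      simp only [Finset.mem_Icc] at hj
      have h3 := heq j hj.1 (by omega)
      have h4 := hmono' j (k+1) hj.1 (by omega) h2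
      omega
    have hnui := hnu (k+1) h1 h2
    unfold nuFn at hnui
    simp only [Nat.add_sub_cancel] at hnui
    by_cases hA : Even (lam (k+1)) <;> by_cases hB : Even (mu (k+1))
    · rw [if_pos hA, if_pos hB] at hnui
      obtain ⟨a, ha⟩ := hA; obtain ⟨b, hb⟩ := hB
      omega
    · -- lam even, mu odd
      rw [if_pos hA, if_neg hB] at hnui
      obtain ⟨a, ha⟩ := hA
      rw [Nat.not_even_iff_odd] at hB
      obtain ⟨b, hb⟩ := hB
      by_cases hC : Even (((Finset.Icc 1 k).filter (fun j => mu j = mu (k+1))).card)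
      · rw [if_pos hC] at hnui
        -- lam (k+1) = mu (k+1) + 1 : hard case
        have hgt : mu (k+1) < lam (k+1) := by omega
        have hcard := filter_Icc_succ_card (fun j => mu j = mu (k+1)) k rfl
        exact (hardcase m (k+1) lam mu hmono hmono' hodd' hnu h1 h2
          ⟨b, hb⟩ hgt (by rw [hcard, Nat.even_add_one, not_not]; exact hC)).elim
      · rw [if_neg hC] at hnui
        have : mu (k+1) = lam (k+1) + 1 := by omega
        exact absurd (hzl (by omega) ▸ (Even.zero)) hC
    · -- lam odd, mu even
      rw [if_neg hA, if_pos hB] at hnui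
      obtain ⟨b, hb⟩ := hB
      rw [Nat.not_even_iff_odd] at hA
      obtain ⟨a, ha⟩ := hA
      by_cases hC : Even (((Finset.Icc 1 k).filter (fun j => lam j = lam (k+1))).card)
      · rw [if_pos hC] at hnui
        have hgt : lam (k+1) < mu (k+1) := by omega
        have hcard := filter_Icc_succ_card (fun j => lam j = lam (k+1)) k rfl
        exact (hardcase m (k+1) mu lam hmono' hmono hodd
          (fun i hi1 hi2 => (hnu i hi1 hi2).symm) h1 h2
          ⟨a, ha⟩ hgt (by rw [hcard, Nat.even_add_one, not_not]; exact hC)).elim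
      · rw [if_neg hC] at hnui
        exact absurd (hzm (by omega) ▸ (Even.zero)) hC
    · -- both odd
      rw [if_neg hA, if_neg hB] at hnui
      rw [Nat.not_even_iff_odd] at hA hB
      obtain ⟨a, ha⟩ := hA
      obtain ⟨b, hb⟩ := hB
      by_cases hCl : Even (((Finset.Icc 1 k).filter (fun j => lam j = lam (k+1))).card) <;>
        by_cases hCm : Even (((Finset.Icc 1 k).filter (fun j => mu j = mu (k+1))).card)
      · rw [if_pos hCl, if_pos hCm] at hnui; omega
      · rw [if_pos hCl, if_neg hCm] at hnui
        exact absurd (hzl (by omega) ▸ (Even.zero)) hCm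
      · rw [if_neg hCl, if_pos hCm] at hnui
        exact absurd (hzm (by omega) ▸ (Even.zero)) hCl
      · rw [if_neg hCl, if_neg hCm] at hnui; omega
end

section
/- Let Λ = (A,B) be a distinguished symbol in a similarity class Z in X_n^{r,s} with r ≥ 1, and let S = (A ∪ B) \ (A ∩ B), written as c_1 < c_2 < … < c_t. Decompose S into intervals: maximal runs where consecutive elements differ by less than r+s. Let I be the set of non-initial intervals (an interval {c_i,…,c_j} is initial if c_i < s). Then the similarity class Z is in bijection with the power set P(I): each symbol in Z is obtained from Λ by swapping the A/B-membership of the entries in a chosen subset of the intervals in I, and distinct subsets yield distinct symbols. -/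
/-- `(A,B)` is an `(r,s)`-symbol of rank `n` (with odd defect, `r ≥ 1` so rows
are genuine sets): any two distinct entries of a row differ by at least `r+s`,
every entry of `B` is `≥ s`, the defect `d = |A| - |B|` is odd, and
`Σ_A + Σ_B = n + (r+s)(m+⌊d/2⌋)(m+d-⌊d/2⌋) - r(m+⌊d/2⌋)` where `m = |B|`. -/
def IsSymbolF (r s n : ℕ) (A B : Finset ℕ) : Prop :=
  (∀ a ∈ A, ∀ a' ∈ A, a < a' → a + (r + s) ≤ a') ∧
  (∀ b ∈ B, ∀ b' ∈ B, b < b' → b + (r + s) ≤ b') ∧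
  (∀ b ∈ B, s ≤ b) ∧
  Odd ((A.card : ℤ) - (B.card : ℤ)) ∧
  (((A.sum id : ℕ) : ℤ) + ((B.sum id : ℕ) : ℤ) =
    (n : ℤ) + (r + s) * ((B.card : ℤ) + ((A.card : ℤ) - B.card).fdiv 2)
        * ((B.card : ℤ) + ((A.card : ℤ) - B.card)
            - ((A.card : ℤ) - B.card).fdiv 2)
      - (r : ℤ) * ((B.card : ℤ) + ((A.card : ℤ) - B.card).fdiv 2))

/-- Two symbols are similar if they have the same union and intersection of rows. -/
def SimilarF (A B A' B' : Finset ℕ) : Prop := A ∪ B = A' ∪ B' ∧ A ∩ B = A' ∩ B'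

/-- `(A,B)` is distinguished: its entries interleave `a_1 ≤ b_1 ≤ a_2 ≤ …`
(counting form). -/
def DistinguishedF (A B : Finset ℕ) : Prop :=
  ∀ t : ℕ, (B.filter (· ≤ t)).card ≤ (A.filter (· ≤ t)).card ∧
    (A.filter (· ≤ t)).card ≤ (B.filter (· ≤ t)).card + 1


namespace Stmt15Aux

open Finset

variable (r s : ℕ) (S : Finset ℕ)

def tailsF : Finset ℕ := S.filter (fun c => ∀ c' ∈ S, c' < c → c' + (r + s) ≤ c)

def tlF (x : ℕ) : ℕ := ((tailsF r s S).filter (· ≤ x)).sup id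

lemma tails_subset : tailsF r s S ⊆ S := filter_subset _ _

lemma tl_max {t x : ℕ} (ht : t ∈ tailsF r s S) (hle : t ≤ x) : t ≤ tlF r s S x :=
  le_sup (f := id) (mem_filter.2 ⟨ht, hle⟩)

lemma tl_le (x : ℕ) : tlF r s S x ≤ x := by
  apply Finset.sup_le; intro b hb; exact (mem_filter.1 hb).2

lemma filter_nonempty {x : ℕ} (hx : x ∈ S) :
    ((tailsF r s S).filter (· ≤ x)).Nonempty := by
  have hne : (S.filter (· ≤ x)).Nonempty := ⟨x, mem_filter.2 ⟨hx, le_rfl⟩⟩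
  have hmmem := (S.filter (· ≤ x)).min'_mem hne
  rw [mem_filter] at hmmem
  refine ⟨(S.filter (· ≤ x)).min' hne, mem_filter.2 ⟨mem_filter.2 ⟨hmmem.1, ?_⟩, hmmem.2⟩⟩
  intro c' hc' hlt
  exfalso
  have hc'x : c' ≤ x := le_trans hlt.le hmmem.2
  have hmem2 : c' ∈ S.filter (· ≤ x) := mem_filter.2 ⟨hc', hc'x⟩
  have h2 : (S.filter (· ≤ x)).min' hne ≤ c' := min'_le _ _ hmem2
  omega

lemma tl_mem {x : ℕ} (hx : x ∈ S) : tlF r s S x ∈ tailsF r s S := by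
  obtain ⟨b, hb, hbe⟩ := Finset.exists_mem_eq_sup _ (filter_nonempty r s S hx) id
  rw [tlF, hbe]; exact (mem_filter.1 hb).1

lemma tl_self {c : ℕ} (hc : c ∈ tailsF r s S) : tlF r s S c = c :=
  le_antisymm (tl_le r s S c) (tl_max r s S hc le_rfl)

lemma tl_close {x y : ℕ} (hx : x ∈ S) (hy : y ∈ S) (hxy : x ≤ y)
    (hcl : y < x + (r + s)) : tlF r s S x = tlF r s S y := by
  apply le_antisymm
  · exact tl_max r s S (tl_mem r s S hx) (le_trans (tl_le r s S x) hxy)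
  · by_cases h : tlF r s S y ≤ x
    · exact tl_max r s S (tl_mem r s S hy) h
    · exfalso
      push_neg at h
      have htt := tl_mem r s S hy
      rw [tailsF, mem_filter] at htt
      have h1 := htt.2 x hx h
      have h2 := tl_le r s S y
      omega

lemma mem_swapU {T : Finset ℕ} (hT : T ⊆ tailsF r s S) {x : ℕ} (hx : x ∈ S) :
    (∃ c ∈ T, c ≤ x ∧ ∀ t ∈ tailsF r s S, t ≤ x → t ≤ c) ↔ tlF r s S x ∈ T := by
  constructor
  · rintro ⟨c, hcT, hcx, hbound⟩
    have h1 : tlF r s S x ≤ c := hbound _ (tl_mem r s S hx) (tl_le r s S x)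
    have h2 : c ≤ tlF r s S x := tl_max r s S (hT hcT) hcx
    rwa [le_antisymm h1 h2]
  · intro ht
    exact ⟨tlF r s S x, ht, tl_le r s S x, fun t htt hle => tl_max r s S htt hle⟩

lemma closed_tl (V : Finset ℕ)
    (hV : ∀ x ∈ S, ∀ y ∈ S, x ≤ y → y < x + (r + s) → (x ∈ V ↔ y ∈ V)) :
    ∀ y ∈ S, (y ∈ V ↔ tlF r s S y ∈ V) := by
  intro y
  induction y using Nat.strong_induction_on with
  | _ y ih =>
    intro hy
    by_cases he : tlF r s S y = y
    · rw [he]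
    · have htl_lt : tlF r s S y < y := lt_of_le_of_ne (tl_le r s S y) he
      have htm := tl_mem r s S hy
      have hPne : (S.filter (· < y)).Nonempty :=
        ⟨tlF r s S y, mem_filter.2 ⟨tails_subset r s S htm, htl_lt⟩⟩
      have hxm := (S.filter (· < y)).max'_mem hPne
      rw [mem_filter] at hxm
      set x := (S.filter (· < y)).max' hPne with hxdef
      have hmax : ∀ z ∈ S, z < y → z ≤ x := fun z hz hlt =>
        Finset.le_max' (S.filter (· < y)) z (mem_filter.2 ⟨hz, hlt⟩)
      have hclose : y < x + (r + s) := by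
        by_contra h
        push_neg at h
        have hyT : y ∈ tailsF r s S := by
          rw [tailsF, mem_filter]
          refine ⟨hy, fun c' hc' hlt => ?_⟩
          have := hmax c' hc' hlt; omega
        exact he (tl_self r s S hyT)
      have heq := tl_close r s S hxm.1 hy (le_of_lt hxm.2) hclose
      rw [← hV x hxm.1 y hy (le_of_lt hxm.2) hclose, ih x hxm.2 hxm.1, heq]

lemma swap_gap (A B U T : Finset ℕ)
    (hS : ∀ x, x ∈ S ↔ ((x ∈ A ∨ x ∈ B) ∧ ¬(x ∈ A ∧ x ∈ B)))
    (hA : ∀ a ∈ A, ∀ a' ∈ A, a < a' → a + (r + s) ≤ a')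
    (hB : ∀ b ∈ B, ∀ b' ∈ B, b < b' → b + (r + s) ≤ b')
    (hU : ∀ x, x ∈ U ↔ (x ∈ S ∧ tlF r s S x ∈ T)) :
    ∀ a ∈ (A \ U) ∪ (B ∩ U), ∀ a' ∈ (A \ U) ∪ (B ∩ U), a < a' → a + (r + s) ≤ a' := by
  intro a ha a' ha' hlt
  simp only [mem_union, mem_sdiff, mem_inter] at ha ha'
  by_contra hc
  push_neg at hc
  rcases ha with ⟨haA, haU⟩ | ⟨haB, haU⟩ <;> rcases ha' with ⟨ha'A, ha'U⟩ | ⟨ha'B, ha'U⟩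
  · exact absurd (hA a haA a' ha'A hlt) (by omega)
  · by_cases haB : a ∈ B
    · exact absurd (hB a haB a' ha'B hlt) (by omega)
    · have haS : a ∈ S := (hS a).2 ⟨Or.inl haA, fun h => haB h.2⟩
      have ha'S : a' ∈ S := ((hU a').1 ha'U).1
      have heq := tl_close r s S haS ha'S (le_of_lt hlt) (by omega)
      exact haU ((hU a).2 ⟨haS, by rw [heq]; exact ((hU a').1 ha'U).2⟩)
  · by_cases ha'B : a' ∈ B
    · exact absurd (hB a haB a' ha'B hlt) (by omega)
    · have ha'S : a' ∈ S := (hS a').2 ⟨Or.inl ha'A, fun h => ha'B h.2⟩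
      have haS : a ∈ S := ((hU a).1 haU).1
      have heq := tl_close r s S haS ha'S (le_of_lt hlt) (by omega)
      exact ha'U ((hU a').2 ⟨ha'S, by rw [← heq]; exact ((hU a).1 haU).2⟩)
  · exact absurd (hB a haB a' ha'B hlt) (by omega)

lemma formula_transfer (r s n : ℕ) (a b x y sx sy : ℤ)
    (hcard : x + y = a + b) (hsum : sx + sy =
      n + (r + s) * (b + (a - b).fdiv 2) * (b + (a - b) - (a - b).fdiv 2)
        - r * (b + (a - b).fdiv 2))
    (hodd : Odd (a - b)) :
    Odd (x - y) ∧ sx + sy =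
      n + (r + s) * (y + (x - y).fdiv 2) * (y + (x - y) - (x - y).fdiv 2)
        - r * (y + (x - y).fdiv 2) := by
  have hconv : ∀ m : ℤ, m.fdiv 2 = m / 2 := fun m => Int.fdiv_eq_ediv_of_nonneg m (by norm_num)
  simp only [hconv] at hsum ⊢
  rw [Int.odd_iff] at hodd
  constructor
  · rw [Int.odd_iff]; omega
  · have h1 : y + (x - y) / 2 = b + (a - b) / 2 := by omega
    have h2 : y + (x - y) - (x - y) / 2 = b + (a - b) - (a - b) / 2 := by omega
    rw [h1, h2, hsum]

lemma part3_ext {A B A' B' S V : Finset ℕ} {x : ℕ}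
    (f1 : x ∈ V ↔ (x ∈ S ∧ ((x ∈ A ∧ x ∈ B') ∨ (x ∈ B ∧ x ∈ A'))))
    (f2 : x ∈ S ↔ ((x ∈ A ∨ x ∈ B) ∧ ¬(x ∈ A ∧ x ∈ B)))
    (f3 : (x ∈ A ∨ x ∈ B) ↔ (x ∈ A' ∨ x ∈ B'))
    (f4 : (x ∈ A ∧ x ∈ B) ↔ (x ∈ A' ∧ x ∈ B')) :
    ((x ∈ A ∧ x ∉ V) ∨ (x ∈ B ∧ x ∈ V)) ↔ x ∈ A' := by
  constructor
  · rintro (⟨hxA, hxV⟩ | ⟨hxB, hxV⟩)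
    · by_contra hxA'
      by_cases hxB : x ∈ B
      · exact hxA' (f4.1 ⟨hxA, hxB⟩).1
      · have hxS : x ∈ S := f2.2 ⟨Or.inl hxA, fun h => hxB h.2⟩
        have hxB' : x ∈ B' := (f3.1 (Or.inl hxA)).resolve_left hxA'
        exact hxV (f1.2 ⟨hxS, Or.inl ⟨hxA, hxB'⟩⟩)
    · obtain ⟨hxS, hor⟩ := f1.1 hxV
      rcases hor with ⟨hxA, -⟩ | ⟨-, hxA'⟩
      · exact absurd ⟨hxA, hxB⟩ (f2.1 hxS).2
      · exact hxA'
  · intro hxA'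
    by_cases hxB' : x ∈ B'
    · have hab := f4.2 ⟨hxA', hxB'⟩
      have hxV : x ∉ V := fun h => (f2.1 (f1.1 h).1).2 hab
      exact Or.inl ⟨hab.1, hxV⟩
    · rcases f3.2 (Or.inl hxA') with hxA | hxB
      · refine Or.inl ⟨hxA, fun h => ?_⟩
        obtain ⟨hxS, hor⟩ := f1.1 h
        rcases hor with ⟨-, hb'⟩ | ⟨hxB, -⟩
        · exact hxB' hb'
        · exact (f2.1 hxS).2 ⟨hxA, hxB⟩
      · have hnA : x ∉ A := fun h => hxB' (f4.1 ⟨h, hxB⟩).2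
        have hxS : x ∈ S := f2.2 ⟨Or.inr hxB, fun h => hnA h.1⟩
        exact Or.inr ⟨hxB, f1.2 ⟨hxS, Or.inr ⟨hxB, hxA'⟩⟩⟩

lemma exch_core {A B A' B' : Finset ℕ} {x y : ℕ}
    (e1 : ¬(x ∈ A ∧ y ∈ A)) (e2 : ¬(x ∈ B ∧ y ∈ B))
    (e3 : ¬(x ∈ A' ∧ y ∈ A')) (e4 : ¬(x ∈ B' ∧ y ∈ B'))
    (f1 : (x ∈ A ∨ x ∈ B) ∧ ¬(x ∈ A ∧ x ∈ B))
    (f2 : (y ∈ A ∨ y ∈ B) ∧ ¬(y ∈ A ∧ y ∈ B))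
    (f3 : (x ∈ A ∨ x ∈ B) ↔ (x ∈ A' ∨ x ∈ B'))
    (f4 : (y ∈ A ∨ y ∈ B) ↔ (y ∈ A' ∨ y ∈ B')) :
    ((x ∈ A ∧ x ∈ B') ∨ (x ∈ B ∧ x ∈ A')) ↔
      ((y ∈ A ∧ y ∈ B') ∨ (y ∈ B ∧ y ∈ A')) := by
  have hxab' : x ∈ A' ∨ x ∈ B' := f3.1 f1.1
  have hyA' : y ∈ A' ∨ y ∈ B' := f4.1 f2.1
  constructor
  · rintro (⟨hxA, hxB'⟩ | ⟨hxB, hxA'⟩)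
    · have hyB : y ∈ B := f2.1.resolve_left (fun h => e1 ⟨hxA, h⟩)
      have hyA' : y ∈ A' := hyA'.resolve_right (fun h => e4 ⟨hxB', h⟩)
      exact Or.inr ⟨hyB, hyA'⟩
    · have hyA : y ∈ A := f2.1.resolve_right (fun h => e2 ⟨hxB, h⟩)
      have hyB' : y ∈ B' := hyA'.resolve_left (fun h => e3 ⟨hxA', h⟩)
      exact Or.inl ⟨hyA, hyB'⟩
  · rintro (⟨hyA, hyB'⟩ | ⟨hyB, hyA'⟩)
    · have hxB : x ∈ B := f1.1.resolve_left (fun h => e1 ⟨h, hyA⟩)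
      have hxA' : x ∈ A' := hxab'.resolve_right (fun h => e4 ⟨h, hyB'⟩)
      exact Or.inr ⟨hxB, hxA'⟩
    · have hxA : x ∈ A := f1.1.resolve_right (fun h => e2 ⟨h, hyB⟩)
      have hxB' : x ∈ B' := hxab'.resolve_left (fun h => e3 ⟨h, hyA'⟩)
      exact Or.inl ⟨hxA, hxB'⟩
end Stmt15Aux

/-- let `Λ = (A,B)` be the distinguished symbol of a similarity
class in `X_n^{r,s}` (`r ≥ 1`), `S = (A ∪ B) \ (A ∩ B)`, decomposed into
intervals (maximal runs with consecutive gaps `< r+s`); an interval is recorded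
by its tail (= minimum), and it is initial if its tail is `< s`.  For a set `T`
of tails of non-initial intervals, swapping the `A`/`B`-membership of all
entries in the corresponding intervals produces a symbol similar to `Λ`; this
map `T ↦ Λ_T` is injective, and every symbol similar to `Λ` arises this way.
Thus the similarity class is in bijection with the power set of the set of
non-initial intervals. -/
theorem stmt15 (r s n : ℕ) (hr : 1 ≤ r) (A B : Finset ℕ)
    (hsym : IsSymbolF r s n A B) (hdist : DistinguishedF A B) :
    let S := (A ∪ B) \ (A ∩ B)
    let Tails := S.filter (fun c => ∀ c' ∈ S, c' < c → c' + (r + s) ≤ c)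
    let NIT := Tails.filter (fun c => s ≤ c)
    let itv := fun c : ℕ => S.filter (fun x => c ≤ x ∧ ∀ t ∈ Tails, t ≤ x → t ≤ c)
    let swapU := fun T : Finset ℕ => S.filter (fun x => ∃ c ∈ T, x ∈ itv c)
    let swapA := fun T : Finset ℕ => (A \ swapU T) ∪ (B ∩ swapU T)
    let swapB := fun T : Finset ℕ => (B \ swapU T) ∪ (A ∩ swapU T)
    (∀ T ⊆ NIT, IsSymbolF r s n (swapA T) (swapB T) ∧
      SimilarF A B (swapA T) (swapB T)) ∧
    (∀ T ⊆ NIT, ∀ T' ⊆ NIT,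
      swapA T = swapA T' → swapB T = swapB T' → T = T') ∧
    (∀ A' B' : Finset ℕ, IsSymbolF r s n A' B' → SimilarF A B A' B' →
      ∃ T ⊆ NIT, swapA T = A' ∧ swapB T = B') := by
  intro S Tails NIT itv swapU swapA swapB
  classical
  obtain ⟨hA, hB, hBs, hodd, hsum⟩ := hsym
  have hSmem : ∀ x, x ∈ S ↔ ((x ∈ A ∨ x ∈ B) ∧ ¬(x ∈ A ∧ x ∈ B)) := by
    intro x
    show x ∈ (A ∪ B) \ (A ∩ B) ↔ _
    simp only [Finset.mem_sdiff, Finset.mem_union, Finset.mem_inter]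
  have hNITsub : NIT ⊆ Tails := Finset.filter_subset _ _
  have hUmem : ∀ T : Finset ℕ, T ⊆ NIT → ∀ x,
      (x ∈ swapU T ↔ (x ∈ S ∧ Stmt15Aux.tlF r s S x ∈ T)) := by
    intro T hT x
    have hT' : T ⊆ Stmt15Aux.tailsF r s S := fun c hc => hNITsub (hT hc)
    show x ∈ S.filter _ ↔ _
    rw [Finset.mem_filter]
    constructor
    · rintro ⟨hxS, c, hcT, hitv⟩
      rw [Finset.mem_filter] at hitv
      exact ⟨hxS, (Stmt15Aux.mem_swapU r s S hT' hxS).1 ⟨c, hcT, hitv.2.1, hitv.2.2⟩⟩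
    · rintro ⟨hxS, ht⟩
      obtain ⟨c, hcT, h1, h2⟩ := (Stmt15Aux.mem_swapU r s S hT' hxS).2 ht
      exact ⟨hxS, c, hcT, Finset.mem_filter.2 ⟨hxS, h1, h2⟩⟩
  have part1 : ∀ T ⊆ NIT, IsSymbolF r s n (swapA T) (swapB T) ∧
      SimilarF A B (swapA T) (swapB T) := by
    intro T hT
    have hU := hUmem T hT
    have hUS : ∀ x, x ∈ swapU T → x ∈ S := fun x h => ((hU x).1 h).1
    have hsim : SimilarF A B (swapA T) (swapB T) := by
      constructor
      · ext x
        show x ∈ A ∪ B ↔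
          x ∈ ((A \ swapU T) ∪ (B ∩ swapU T)) ∪ ((B \ swapU T) ∪ (A ∩ swapU T))
        simp only [Finset.mem_union, Finset.mem_sdiff, Finset.mem_inter]
        constructor
        · intro h
          by_cases hxU : x ∈ swapU T
          · rcases h with h | h
            exacts [Or.inr (Or.inr ⟨h, hxU⟩), Or.inl (Or.inr ⟨h, hxU⟩)]
          · rcases h with h | h
            exacts [Or.inl (Or.inl ⟨h, hxU⟩), Or.inr (Or.inl ⟨h, hxU⟩)]
        · rintro ((⟨h, -⟩ | ⟨h, -⟩) | (⟨h, -⟩ | ⟨h, -⟩))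
          exacts [Or.inl h, Or.inr h, Or.inr h, Or.inl h]
      · ext x
        show x ∈ A ∩ B ↔
          x ∈ ((A \ swapU T) ∪ (B ∩ swapU T)) ∩ ((B \ swapU T) ∪ (A ∩ swapU T))
        simp only [Finset.mem_union, Finset.mem_sdiff, Finset.mem_inter]
        constructor
        · intro hAB
          have hxnS : ¬ x ∈ S := fun h => ((hSmem x).1 h).2 hAB
          have hxnU : ¬ x ∈ swapU T := fun h => hxnS (hUS x h)
          exact ⟨Or.inl ⟨hAB.1, hxnU⟩, Or.inl ⟨hAB.2, hxnU⟩⟩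
        · rintro ⟨ha, hb⟩
          rcases ha with ⟨hxA, hxU⟩ | ⟨hxB, hxU⟩ <;>
            rcases hb with ⟨hxB', hxU'⟩ | ⟨hxA', hxU'⟩
          · exact ⟨hxA, hxB'⟩
          · exact absurd hxU' hxU
          · exact absurd hxU hxU'
          · exact absurd ⟨hxA', hxB⟩ (((hSmem x).1 (hUS x hxU)).2)
    refine ⟨?_, hsim⟩
    obtain ⟨hu, hi⟩ := hsim
    have hcard : (swapA T).card + (swapB T).card = A.card + B.card := by
      rw [← Finset.card_union_add_card_inter A B, hu, hi,
        Finset.card_union_add_card_inter]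
    have hsum2 : (swapA T).sum id + (swapB T).sum id = A.sum id + B.sum id := by
      rw [← Finset.sum_union_inter (s₁ := A) (s₂ := B), hu, hi,
        Finset.sum_union_inter]
    have hsumZ : (((swapA T).sum id : ℕ) : ℤ) + (((swapB T).sum id : ℕ) : ℤ)
        = ((A.sum id : ℕ) : ℤ) + ((B.sum id : ℕ) : ℤ) := by exact_mod_cast hsum2
    have hform := Stmt15Aux.formula_transfer r s n A.card B.card
      ((swapA T).card) ((swapB T).card) (((swapA T).sum id : ℕ) : ℤ)
      (((swapB T).sum id : ℕ) : ℤ) (by exact_mod_cast hcard) (hsumZ.trans hsum) hodd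
    refine ⟨?_, ?_, ?_, hform.1, hform.2⟩
    · exact Stmt15Aux.swap_gap r s S A B (swapU T) T hSmem hA hB hU
    · refine Stmt15Aux.swap_gap r s S B A (swapU T) T ?_ hB hA hU
      exact fun x => (hSmem x).trans (and_congr or_comm (not_congr and_comm))
    · intro b hb
      have hb' : b ∈ (B \ swapU T) ∪ (A ∩ swapU T) := hb
      rcases Finset.mem_union.1 hb' with h | h
      · exact hBs b (Finset.mem_sdiff.1 h).1
      · have h2 := Finset.mem_inter.1 h
        have h3 := (hU b).1 h2.2
        have h4 : s ≤ Stmt15Aux.tlF r s S b := (Finset.mem_filter.1 (hT h3.2)).2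
        have h5 := Stmt15Aux.tl_le r s S b
        omega
  have key2 : ∀ T ⊆ NIT, ∀ T' ⊆ NIT,
      swapA T = swapA T' → swapB T = swapB T' → T ⊆ T' := by
    intro T hT T' hT' hAe hBe c hc
    have hU := hUmem T hT
    have hU' := hUmem T' hT'
    have hcT : c ∈ Stmt15Aux.tailsF r s S := hNITsub (hT hc)
    have hcS : c ∈ S := Stmt15Aux.tails_subset r s S hcT
    have htl : Stmt15Aux.tlF r s S c = c := Stmt15Aux.tl_self r s S hcT
    have hcU : c ∈ swapU T := (hU c).2 ⟨hcS, by rw [htl]; exact hc⟩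
    by_contra hcT'
    have hcU' : c ∉ swapU T' := fun h => hcT' (by
      have h2 := ((hU' c).1 h).2
      rwa [htl] at h2)
    have hcs := (hSmem c).1 hcS
    rcases hcs.1 with hcA | hcB
    · have hcB : c ∉ B := fun h => hcs.2 ⟨hcA, h⟩
      have h1 : c ∈ swapB T :=
        Finset.mem_union_right _ (Finset.mem_inter.2 ⟨hcA, hcU⟩)
      rw [hBe] at h1
      have h2 : c ∈ (B \ swapU T') ∪ (A ∩ swapU T') := h1
      rcases Finset.mem_union.1 h2 with h | h
      · exact hcB (Finset.mem_sdiff.1 h).1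
      · exact hcU' (Finset.mem_inter.1 h).2
    · have hcA : c ∉ A := fun h => hcs.2 ⟨h, hcB⟩
      have h1 : c ∈ swapA T :=
        Finset.mem_union_right _ (Finset.mem_inter.2 ⟨hcB, hcU⟩)
      rw [hAe] at h1
      have h2 : c ∈ (A \ swapU T') ∪ (B ∩ swapU T') := h1
      rcases Finset.mem_union.1 h2 with h | h
      · exact hcA (Finset.mem_sdiff.1 h).1
      · exact hcU' (Finset.mem_inter.1 h).2
  refine ⟨part1, fun T hT T' hT' h1 h2 =>
    Finset.Subset.antisymm (key2 T hT T' hT' h1 h2) (key2 T' hT' T hT h1.symm h2.symm), ?_⟩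
  intro A' B' hsym' hsim'
  obtain ⟨hA', hB', hBs', hodd', hsum'⟩ := hsym'
  obtain ⟨hu, hi⟩ := hsim'
  have huP : ∀ x, (x ∈ A ∨ x ∈ B) ↔ (x ∈ A' ∨ x ∈ B') := fun x => by
    have := Finset.ext_iff.1 hu x
    simpa only [Finset.mem_union] using this
  have hiP : ∀ x, (x ∈ A ∧ x ∈ B) ↔ (x ∈ A' ∧ x ∈ B') := fun x => by
    have := Finset.ext_iff.1 hi x
    simpa only [Finset.mem_inter] using this
  set V := S.filter (fun x => (x ∈ A ∧ x ∈ B') ∨ (x ∈ B ∧ x ∈ A')) with hVdef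
  have hVmem : ∀ x, x ∈ V ↔ (x ∈ S ∧ ((x ∈ A ∧ x ∈ B') ∨ (x ∈ B ∧ x ∈ A'))) :=
    fun x => Finset.mem_filter
  have hexch : ∀ x ∈ S, ∀ y ∈ S, x ≤ y → y < x + (r + s) → (x ∈ V ↔ y ∈ V) := by
    intro x hx y hy hle hcl
    rcases eq_or_lt_of_le hle with rfl | hlt
    · exact Iff.rfl
    · have e1 : ¬(x ∈ A ∧ y ∈ A) := fun h => absurd (hA x h.1 y h.2 hlt) (by omega)
      have e2 : ¬(x ∈ B ∧ y ∈ B) := fun h => absurd (hB x h.1 y h.2 hlt) (by omega)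
      have e3 : ¬(x ∈ A' ∧ y ∈ A') := fun h => absurd (hA' x h.1 y h.2 hlt) (by omega)
      have e4 : ¬(x ∈ B' ∧ y ∈ B') := fun h => absurd (hB' x h.1 y h.2 hlt) (by omega)
      have f1 := (hSmem x).1 hx
      have f2 := (hSmem y).1 hy
      have f3 := huP x
      have f4 := huP y
      rw [hVmem, hVmem]
      have core := Stmt15Aux.exch_core e1 e2 e3 e4 f1 f2 f3 f4
      exact ⟨fun h => ⟨hy, core.1 h.2⟩, fun h => ⟨hx, core.2 h.2⟩⟩
  have hclosed := Stmt15Aux.closed_tl r s S V hexch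
  set T := (Stmt15Aux.tailsF r s S).filter (fun c => c ∈ V) with hTdef
  have hTsub : T ⊆ NIT := by
    intro c hc
    rw [Finset.mem_filter] at hc
    have hcV := (hVmem c).1 hc.2
    refine Finset.mem_filter.2 ⟨hc.1, ?_⟩
    rcases hcV.2 with ⟨-, hb'⟩ | ⟨hb, -⟩
    · exact hBs' c hb'
    · exact hBs c hb
  have hUV : swapU T = V := by
    ext x
    rw [hUmem T hTsub x, hVmem x]
    constructor
    · rintro ⟨hxS, htl⟩
      rw [Finset.mem_filter] at htl
      exact ⟨hxS, ((hVmem x).1 ((hclosed x hxS).2 htl.2)).2⟩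
    · rintro ⟨hxS, hxO⟩
      have hxV : x ∈ V := (hVmem x).2 ⟨hxS, hxO⟩
      have htlV := (hclosed x hxS).1 hxV
      exact ⟨hxS, Finset.mem_filter.2 ⟨Stmt15Aux.tl_mem r s S hxS, htlV⟩⟩
  refine ⟨T, hTsub, ?_, ?_⟩
  · show (A \ swapU T) ∪ (B ∩ swapU T) = A'
    rw [hUV]
    ext x
    simp only [Finset.mem_union, Finset.mem_sdiff, Finset.mem_inter]
    exact Stmt15Aux.part3_ext (hVmem x) (hSmem x) (huP x) (hiP x)
  · show (B \ swapU T) ∪ (A ∩ swapU T) = B'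
    rw [hUV]
    ext x
    simp only [Finset.mem_union, Finset.mem_sdiff, Finset.mem_inter]
    exact Stmt15Aux.part3_ext
      ((hVmem x).trans (and_congr_right fun _ => or_comm))
      ((hSmem x).trans (and_congr or_comm (not_congr and_comm)))
      (or_comm.trans ((huP x).trans or_comm))
      (and_comm.trans ((hiP x).trans and_comm))
end

section
/- Every similarity class in X_n^{r,s} (r ≥ 1) contains a unique distinguished symbol. -/
def posIn (T : Finset ℕ) (x : ℕ) : ℕ := (T.filter (· ≤ x)).card

lemma rank_count (T : Finset ℕ) :
    (T.filter fun x => Odd (posIn T x)).card = (T.card + 1) / 2 := by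
  induction T using Finset.induction_on_max with
  | empty => simp
  | insert a s ha ih =>
    have hns : a ∉ s := fun hmem => lt_irrefl a (ha a hmem)
    have hpos : ∀ x ∈ s, posIn (insert a s) x = posIn s x := by
      intro x hx
      unfold posIn
      rw [Finset.filter_insert, if_neg (not_le.2 (ha x hx))]
    have hposa : posIn (insert a s) a = s.card + 1 := by
      unfold posIn
      rw [Finset.filter_insert, if_pos le_rfl]
      rw [Finset.filter_true_of_mem (fun x hx => le_of_lt (ha x hx)),
        Finset.card_insert_of_notMem hns]
    have hfe : s.filter (fun x => Odd (posIn (insert a s) x))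
        = s.filter (fun x => Odd (posIn s x)) := by
      apply Finset.filter_congr
      intro x hx
      rw [hpos x hx]
    rw [Finset.filter_insert, hposa, Finset.card_insert_of_notMem hns]
    by_cases hodd : Odd (s.card + 1)
    · rw [if_pos hodd, Finset.card_insert_of_notMem (fun hc => hns (Finset.mem_of_mem_filter _ hc)),
        hfe, ih]
      rcases hodd with ⟨k, hk⟩
      omega
    · rw [if_neg hodd, hfe, ih]
      rw [Nat.odd_iff] at hodd
      omega
/-- every similarity class in `X_n^{r,s}` (`r ≥ 1`) contains a
unique distinguished symbol. -/
theorem stmt16 (r s n : ℕ) (hr : 1 ≤ r) (A B : Finset ℕ)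
    (h : IsSymbolF r s n A B) :
    ∃! AB : Finset ℕ × Finset ℕ,
      IsSymbolF r s n AB.1 AB.2 ∧ SimilarF A B AB.1 AB.2 ∧
        DistinguishedF AB.1 AB.2 := by
  classical
  obtain ⟨hA, hB, hBs, hodd, hsum⟩ := h
  set U := A ∪ B with hU
  set I := A ∩ B with hI
  set S := U \ I with hSdef
  have hIU : I ⊆ U := Finset.inter_subset_union
  have hIS : Disjoint I S := Finset.disjoint_sdiff
  have hSU : S ⊆ U := Finset.sdiff_subset
  have hUIS : U = I ∪ S := by
    rw [hSdef, Finset.union_sdiff_of_subset hIU]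
  -- pigeonhole spacing: rows
  have hrowIA : ∀ x ∈ I, x ∈ A := fun x hx => (Finset.mem_inter.1 hx).1
  have hrowIB : ∀ x ∈ I, x ∈ B := fun x hx => (Finset.mem_inter.1 hx).2
  have key3 : ∀ x ∈ U, ∀ y ∈ U, ∀ z ∈ U, x < y → y < z → x + (r+s) ≤ z := by
    intro x hx y hy z hz hxy hyz
    rcases Finset.mem_union.1 hx with hx' | hx' <;>
      rcases Finset.mem_union.1 hy with hy' | hy' <;>
        rcases Finset.mem_union.1 hz with hz' | hz'
    · have := hA x hx' y hy' hxy; omega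
    · have := hA x hx' y hy' hxy; omega
    · have := hA x hx' z hz' (by omega); omega
    · have := hB y hy' z hz' hyz; omega
    · have := hA y hy' z hz' hyz; omega
    · have := hB x hx' z hz' (by omega); omega
    · have := hB x hx' y hy' hxy; omega
    · have := hB x hx' y hy' hxy; omega
  have keypair : ∀ x y : ℕ, x < y → (x ∈ A ∧ y ∈ A) ∨ (x ∈ B ∧ y ∈ B) →
      x + (r+s) ≤ y := by
    rintro x y hxy (⟨h1,h2⟩|⟨h1,h2⟩)
    · exact hA x h1 y h2 hxy
    · exact hB x h1 y h2 hxy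
  have keyI : ∀ x ∈ U, ∀ y ∈ U, x < y → (x ∈ I ∨ y ∈ I) → x + (r+s) ≤ y := by
    rintro x hx y hy hxy (hxI | hyI)
    · rcases Finset.mem_union.1 hy with hy' | hy'
      · exact keypair x y hxy (Or.inl ⟨hrowIA x hxI, hy'⟩)
      · exact keypair x y hxy (Or.inr ⟨hrowIB x hxI, hy'⟩)
    · rcases Finset.mem_union.1 hx with hx' | hx'
      · exact keypair x y hxy (Or.inl ⟨hx', hrowIA y hyI⟩)
      · exact keypair x y hxy (Or.inr ⟨hx', hrowIB y hyI⟩)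
  -- splitting of pos counts
  have hsplit : ∀ x y : ℕ, x < y → posIn S y
      = posIn S x + (S.filter fun z => x < z ∧ z ≤ y).card := by
    intro x y hxy
    unfold posIn
    rw [← Finset.card_union_of_disjoint (by
      simp only [Finset.disjoint_left, Finset.mem_filter]
      rintro a ⟨-, ha⟩ ⟨-, ha2, -⟩; omega)]
    congr 1
    ext z
    simp only [Finset.mem_union, Finset.mem_filter]
    constructor
    · rintro ⟨hz, hzy⟩
      by_cases hc : z ≤ x
      · exact Or.inl ⟨hz, hc⟩
      · exact Or.inr ⟨hz, by omega, hzy⟩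
    · rintro (⟨hz, hzx⟩ | ⟨hz, -, hzy⟩)
      · exact ⟨hz, by omega⟩
      · exact ⟨hz, hzy⟩
  have pos_mem_self : ∀ x ∈ S, x ∈ S.filter (· ≤ x) := by
    intro x hx; exact Finset.mem_filter.2 ⟨hx, le_rfl⟩
  have pos_pos : ∀ x ∈ S, 1 ≤ posIn S x := by
    intro x hx
    exact Finset.card_pos.2 ⟨x, pos_mem_self x hx⟩
  -- strict monotonicity with gap info
  have pos_strict : ∀ x ∈ S, ∀ y ∈ S, x < y → posIn S x + 1 ≤ posIn S y := by
    intro x hx y hy hxy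
    rw [hsplit x y hxy]
    have : y ∈ S.filter fun z => x < z ∧ z ≤ y :=
      Finset.mem_filter.2 ⟨hy, hxy, le_rfl⟩
    have := Finset.card_pos.2 ⟨y, this⟩
    omega
  -- if pos differ by ≥ 2, there's an intermediate element of S
  have pos_between : ∀ x ∈ S, ∀ y ∈ S, x < y → posIn S x + 2 ≤ posIn S y →
      ∃ z ∈ S, x < z ∧ z < y := by
    intro x hx y hy hxy hgap
    rw [hsplit x y hxy] at hgap
    have h2 : 1 < (S.filter fun z => x < z ∧ z ≤ y).card := by omega
    obtain ⟨z, hz, hzy⟩ := Finset.exists_mem_ne h2 y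
    rw [Finset.mem_filter] at hz
    exact ⟨z, hz.1, hz.2.1, lt_of_le_of_ne hz.2.2 hzy⟩
  -- generic spacing for a new row I ∪ S.filter p where p forces same parity
  have rowspace : ∀ (p : ℕ → Prop) (_ : DecidablePred p),
      (∀ x ∈ S, ∀ y ∈ S, p x → p y → posIn S x % 2 = posIn S y % 2) →
      ∀ x ∈ I ∪ S.filter p, ∀ y ∈ I ∪ S.filter p, x < y → x + (r+s) ≤ y := by
    intro p _ hpar x hx y hy hxy
    have hxU : x ∈ U := by
      rcases Finset.mem_union.1 hx with h' | h'
      · exact hIU h'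
      · exact hSU (Finset.mem_of_mem_filter _ h')
    have hyU : y ∈ U := by
      rcases Finset.mem_union.1 hy with h' | h'
      · exact hIU h'
      · exact hSU (Finset.mem_of_mem_filter _ h')
    rcases Finset.mem_union.1 hx with hx' | hx'
    · exact keyI x hxU y hyU hxy (Or.inl hx')
    rcases Finset.mem_union.1 hy with hy' | hy'
    · exact keyI x hxU y hyU hxy (Or.inr hy')
    rw [Finset.mem_filter] at hx' hy'
    have hmono := pos_strict x hx'.1 y hy'.1 hxy
    have hpareq := hpar x hx'.1 y hy'.1 hx'.2 hy'.2
    obtain ⟨z, hzS, hz1, hz2⟩ := pos_between x hx'.1 y hy'.1 hxy (by omega)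
    exact key3 x hxU z (hSU hzS) y hyU hz1 hz2
  -- restriction of pos to a threshold
  have hposres : ∀ (t : ℕ), ∀ x ∈ S.filter (· ≤ t),
      posIn S x = posIn (S.filter (· ≤ t)) x := by
    intro t x hx
    rw [Finset.mem_filter] at hx
    unfold posIn
    congr 1
    ext z
    simp only [Finset.mem_filter]
    constructor
    · rintro ⟨hz, hzx⟩; exact ⟨⟨hz, by omega⟩, hzx⟩
    · rintro ⟨⟨hz, -⟩, hzx⟩; exact ⟨hz, hzx⟩
  have hOddCount : ∀ t : ℕ,
      ((S.filter (· ≤ t)).filter (fun x => Odd (posIn S x))).card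
        = ((S.filter (· ≤ t)).card + 1) / 2 := by
    intro t
    rw [Finset.filter_congr (fun x hx => iff_of_eq (congrArg Odd (hposres t x hx)))]
    exact rank_count _
  have hcompl : ∀ t : ℕ,
      ((S.filter (· ≤ t)).filter (fun x => Odd (posIn S x))).card
      + ((S.filter (· ≤ t)).filter (fun x => ¬ Odd (posIn S x))).card
      = (S.filter (· ≤ t)).card := by
    intro t
    exact Finset.card_filter_add_card_filter_not (fun x => Odd (posIn S x))
  set Sodd := S.filter (fun x => Odd (posIn S x)) with hSoddDef
  set Sev := S.filter (fun x => ¬ Odd (posIn S x)) with hSevDef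
  have hdISodd : Disjoint I Sodd := hIS.mono_right (Finset.filter_subset _ _)
  have hdISev : Disjoint I Sev := hIS.mono_right (Finset.filter_subset _ _)
  -- threshold counts of constructed rows
  have hcountO : ∀ t : ℕ, ((I ∪ Sodd).filter (· ≤ t)).card
      = (I.filter (· ≤ t)).card + ((S.filter (· ≤ t)).card + 1) / 2 := by
    intro t
    rw [Finset.filter_union,
      Finset.card_union_of_disjoint
        (Finset.disjoint_filter_filter hdISodd),
      hSoddDef, Finset.filter_comm, hOddCount t]
  have hcountE : ∀ t : ℕ, ((I ∪ Sev).filter (· ≤ t)).card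
      = (I.filter (· ≤ t)).card + (S.filter (· ≤ t)).card / 2 := by
    intro t
    rw [Finset.filter_union,
      Finset.card_union_of_disjoint
        (Finset.disjoint_filter_filter hdISev),
      hSevDef, Finset.filter_comm]
    have h1 := hcompl t
    have h2 := hOddCount t
    omega
  -- global cardinalities
  have hScardOdd : S.card % 2 = 1 := by
    obtain ⟨k, hk⟩ := hodd
    have h1 : U.card + I.card = A.card + B.card :=
      Finset.card_union_add_card_inter A B
    have h2 : S.card + I.card = U.card :=
      Finset.card_sdiff_add_card_eq_card hIU
    omega
  have hSoddcard : Sodd.card = (S.card + 1) / 2 := rank_count S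
  have hSevcard : Sodd.card + Sev.card = S.card :=
    Finset.card_filter_add_card_filter_not (fun x => Odd (posIn S x))
  have hcardA' : (I ∪ Sodd).card = I.card + (S.card + 1) / 2 := by
    rw [Finset.card_union_of_disjoint hdISodd, hSoddcard]
  have hcardB' : (I ∪ Sev).card = I.card + S.card / 2 := by
    rw [Finset.card_union_of_disjoint hdISev]; omega
  -- sums
  have hsumA'B' : (I ∪ Sodd).sum id + (I ∪ Sev).sum id = A.sum id + B.sum id := by
    rw [Finset.sum_union hdISodd, Finset.sum_union hdISev]
    have h1 : Sodd.sum id + Sev.sum id = S.sum id :=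
      Finset.sum_filter_add_sum_filter_not S (fun x => Odd (posIn S x)) id
    have h2 : S.sum id + I.sum id = U.sum id := Finset.sum_sdiff hIU
    have h3 : U.sum id + I.sum id = A.sum id + B.sum id :=
      Finset.sum_union_inter
    simp only [id_eq] at h1 h2 h3 ⊢
    omega
  -- fdiv computations
  obtain ⟨k, hk⟩ := hodd
  have hfdiv : ((A.card : ℤ) - B.card).fdiv 2 = k := by
    rw [hk, Int.fdiv_eq_ediv_of_nonneg _ (by norm_num)]
    omega
  have hcards : U.card + I.card = A.card + B.card :=
    Finset.card_union_add_card_inter A B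
  have hcards2 : S.card + I.card = U.card :=
    Finset.card_sdiff_add_card_eq_card hIU
  have hm' : ((I ∪ Sev).card : ℤ) = (B.card : ℤ) + k := by
    rw [hcardB']; push_cast; omega
  have hma' : ((I ∪ Sodd).card : ℤ) = (B.card : ℤ) + k + 1 := by
    rw [hcardA']; push_cast; omega
  have hfdiv1 : ((((I ∪ Sodd).card : ℤ)) - ((I ∪ Sev).card : ℤ)).fdiv 2 = 0 := by
    rw [hma', hm']
    ring_nf
    decide
  -- the constructed symbol satisfies IsSymbolF
  have hSymbol : IsSymbolF r s n (I ∪ Sodd) (I ∪ Sev) := by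
    refine ⟨?_, ?_, ?_, ?_, ?_⟩
    · exact rowspace (fun x => Odd (posIn S x)) inferInstance
        (fun x hx y hy hpx hpy => by
          have h1 := Nat.odd_iff.mp hpx
          have h2 := Nat.odd_iff.mp hpy
          omega)
    · exact rowspace (fun x => ¬ Odd (posIn S x)) inferInstance
        (fun x hx y hy hpx hpy => by
          have h1 := Nat.even_iff.mp (Nat.not_odd_iff_even.mp hpx)
          have h2 := Nat.even_iff.mp (Nat.not_odd_iff_even.mp hpy)
          omega)
    · intro b hb
      rcases Finset.mem_union.1 hb with hb' | hb'
      · exact hBs b (hrowIB b hb')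
      · rw [hSevDef, Finset.mem_filter] at hb'
        obtain ⟨hbS, hbodd⟩ := hb'
        have h1 := pos_pos b hbS
        have h2 : 2 ≤ posIn S b := by rw [Nat.odd_iff] at hbodd; omega
        unfold posIn at h2
        obtain ⟨z, hz, hzb⟩ := Finset.exists_mem_ne
          (show 1 < (S.filter (· ≤ b)).card by omega) b
        rw [Finset.mem_filter] at hz
        have hzlt : z < b := lt_of_le_of_ne hz.2 hzb
        have hzU : z ∈ U := hSU hz.1
        have hbU : b ∈ U := hSU hbS
        rcases Finset.mem_union.1 hbU with hb2 | hb2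
        · rcases Finset.mem_union.1 hzU with hz2 | hz2
          · have := hA z hz2 b hb2 hzlt; omega
          · have := hBs z hz2; omega
        · exact hBs b hb2
    · rw [hma', hm']; exact ⟨0, by ring⟩
    · rw [hfdiv1, hma', hm']
      rw [show (((I ∪ Sodd).sum id : ℕ) : ℤ) + (((I ∪ Sev).sum id : ℕ) : ℤ)
          = ((A.sum id : ℕ) : ℤ) + ((B.sum id : ℕ) : ℤ) by exact_mod_cast hsumA'B']
      rw [hsum, hfdiv, hk]
      ring
  have hSimilar : SimilarF A B (I ∪ Sodd) (I ∪ Sev) := by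
    constructor
    · show U = _
      rw [Finset.union_union_union_comm, Finset.union_self,
        hSoddDef, hSevDef, Finset.filter_union_filter_not_eq, ← hUIS]
    · show I = _
      ext x
      simp only [Finset.mem_inter, Finset.mem_union, hSoddDef, hSevDef,
        Finset.mem_filter]
      constructor
      · intro hx; exact ⟨Or.inl hx, Or.inl hx⟩
      · rintro ⟨hx1 | hx1, hx2 | hx2⟩
        · exact hx1
        · exact hx1
        · exact hx2
        · exact absurd hx1.2 (by simpa using hx2.2)
  have hDist : DistinguishedF (I ∪ Sodd) (I ∪ Sev) := by
    intro t
    rw [hcountO t, hcountE t]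
    omega
  refine ⟨(I ∪ Sodd, I ∪ Sev), ⟨hSymbol, hSimilar, hDist⟩, ?_⟩
  rintro ⟨A₂, B₂⟩ ⟨-, ⟨hu₂, hi₂⟩, hd₂⟩
  simp only at hu₂ hi₂ hd₂
  have hU₂ : U = A₂ ∪ B₂ := hu₂
  have hI₂ : I = A₂ ∩ B₂ := hi₂
  have hA₂U : A₂ ⊆ U := hU₂ ▸ Finset.subset_union_left
  have hB₂U : B₂ ⊆ U := hU₂ ▸ Finset.subset_union_right
  have hIA₂ : I ⊆ A₂ := by rw [hI₂]; exact Finset.inter_subset_left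
  have hIB₂ : I ⊆ B₂ := by rw [hI₂]; exact Finset.inter_subset_right
  have hdecompA : A₂ = I ∪ (A₂ ∩ S) := by
    ext x
    simp only [Finset.mem_union, Finset.mem_inter]
    constructor
    · intro hx
      by_cases hxB : x ∈ B₂
      · exact Or.inl (hI₂ ▸ Finset.mem_inter.2 ⟨hx, hxB⟩)
      · refine Or.inr ⟨hx, ?_⟩
        rw [hSdef]
        exact Finset.mem_sdiff.2 ⟨hA₂U hx, fun hc => hxB (hIB₂ hc)⟩
    · rintro (hx | ⟨hx, -⟩)
      · exact hIA₂ hx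
      · exact hx
  have hdecompB : B₂ = I ∪ (B₂ ∩ S) := by
    ext x
    simp only [Finset.mem_union, Finset.mem_inter]
    constructor
    · intro hx
      by_cases hxA : x ∈ A₂
      · exact Or.inl (hI₂ ▸ Finset.mem_inter.2 ⟨hxA, hx⟩)
      · refine Or.inr ⟨hx, ?_⟩
        rw [hSdef]
        exact Finset.mem_sdiff.2 ⟨hB₂U hx, fun hc => hxA (hIA₂ hc)⟩
    · rintro (hx | ⟨hx, -⟩)
      · exact hIB₂ hx
      · exact hx
  have hdisjA2 : Disjoint I (A₂ ∩ S) := hIS.mono_right Finset.inter_subset_right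
  have hdisjB2 : Disjoint I (B₂ ∩ S) := hIS.mono_right Finset.inter_subset_right
  have hdisjAB : Disjoint (A₂ ∩ S) (B₂ ∩ S) := by
    rw [Finset.disjoint_left]
    intro a ha hb
    rw [Finset.mem_inter] at ha hb
    exact Finset.disjoint_left.mp hIS
      (hI₂ ▸ Finset.mem_inter.2 ⟨ha.1, hb.1⟩) ha.2
  have hunionAB : (A₂ ∩ S) ∪ (B₂ ∩ S) = S := by
    rw [← Finset.union_inter_distrib_right, ← hU₂,
      Finset.inter_eq_right.2 hSU]
  have hpart : ∀ t : ℕ, ((A₂ ∩ S).filter (· ≤ t)).card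
      + ((B₂ ∩ S).filter (· ≤ t)).card = (S.filter (· ≤ t)).card := by
    intro t
    rw [← Finset.card_union_of_disjoint
      (Finset.disjoint_filter_filter hdisjAB), ← Finset.filter_union, hunionAB]
  have halpha : ∀ t : ℕ, ((A₂ ∩ S).filter (· ≤ t)).card
      = ((S.filter (· ≤ t)).card + 1) / 2 := by
    intro t
    have hd := hd₂ t
    have e1 : (A₂.filter (· ≤ t)).card = (I.filter (· ≤ t)).card
        + ((A₂ ∩ S).filter (· ≤ t)).card := by
      conv_lhs => rw [hdecompA]
      rw [Finset.filter_union,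
        Finset.card_union_of_disjoint (Finset.disjoint_filter_filter hdisjA2)]
    have e2 : (B₂.filter (· ≤ t)).card = (I.filter (· ≤ t)).card
        + ((B₂ ∩ S).filter (· ≤ t)).card := by
      conv_lhs => rw [hdecompB]
      rw [Finset.filter_union,
        Finset.card_union_of_disjoint (Finset.disjoint_filter_filter hdisjB2)]
    have hp := hpart t
    omega
  -- strict-threshold versions
  have hstrict : ∀ (C : Finset ℕ) (x : ℕ),
      (C.filter (· < x)).card = if x = 0 then 0 else (C.filter (· ≤ x - 1)).card := by
    intro C x
    cases x with
    | zero => simp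
    | succ y =>
      simp only [Nat.succ_ne_zero, if_false, Nat.add_sub_cancel]
      congr 1
      apply Finset.filter_congr
      intro z hz
      simp [Nat.lt_succ_iff]
  have halpha' : ∀ x : ℕ, ((A₂ ∩ S).filter (· < x)).card
      = ((S.filter (· < x)).card + 1) / 2 := by
    intro x
    rw [hstrict (A₂ ∩ S) x, hstrict S x]
    cases x with
    | zero => simp
    | succ y => simpa using halpha y
  have hpart' : ∀ x : ℕ, ((A₂ ∩ S).filter (· < x)).card
      + ((B₂ ∩ S).filter (· < x)).card = (S.filter (· < x)).card := by
    intro x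
    rw [hstrict (A₂ ∩ S) x, hstrict (B₂ ∩ S) x, hstrict S x]
    cases x with
    | zero => simp
    | succ y => simpa using hpart y
  -- the insert trick
  have hins : ∀ (C : Finset ℕ) (x : ℕ), x ∈ C →
      (C.filter (· ≤ x)).card = (C.filter (· < x)).card + 1 := by
    intro C x hx
    have : C.filter (· ≤ x) = insert x (C.filter (· < x)) := by
      ext z
      simp only [Finset.mem_filter, Finset.mem_insert]
      constructor
      · rintro ⟨hz, hle⟩
        rcases eq_or_lt_of_le hle with h' | h'
        · exact Or.inl h'
        · exact Or.inr ⟨hz, h'⟩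
      · rintro (rfl | ⟨hz, hlt⟩)
        · exact ⟨hx, le_rfl⟩
        · exact ⟨hz, le_of_lt hlt⟩
    rw [this, Finset.card_insert_of_notMem (by simp)]
  have hmem : ∀ x ∈ S, (x ∈ A₂ ↔ Odd (posIn S x)) := by
    intro x hxS
    have hkx : (S.filter (· ≤ x)).card = (S.filter (· < x)).card + 1 :=
      hins S x hxS
    have hposx : posIn S x = (S.filter (· ≤ x)).card := rfl
    rw [hposx, Nat.odd_iff]
    constructor
    · intro hxA₂
      have hkA := hins (A₂ ∩ S) x (Finset.mem_inter.2 ⟨hxA₂, hxS⟩)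
      have h1 := halpha x
      have h2 := halpha' x
      omega
    · intro hoddx
      by_contra hxA₂
      have hxB₂ : x ∈ B₂ := by
        have hxU : x ∈ U := hSU hxS
        rw [hU₂] at hxU
        rcases Finset.mem_union.1 hxU with h' | h'
        · exact absurd h' hxA₂
        · exact h'
      have hkB := hins (B₂ ∩ S) x (Finset.mem_inter.2 ⟨hxB₂, hxS⟩)
      have h1 := hpart x
      have h2 := hpart' x
      have h3 := halpha x
      have h4 := halpha' x
      omega
  have hA₂eq : A₂ = I ∪ Sodd := by
    rw [hdecompA]
    congr 1
    ext x
    simp only [Finset.mem_inter, hSoddDef, Finset.mem_filter]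
    constructor
    · rintro ⟨hxA, hxS⟩
      exact ⟨hxS, (hmem x hxS).1 hxA⟩
    · rintro ⟨hxS, ho⟩
      exact ⟨(hmem x hxS).2 ho, hxS⟩
  have hB₂eq : B₂ = I ∪ Sev := by
    rw [hdecompB]
    congr 1
    ext x
    simp only [Finset.mem_inter, hSevDef, Finset.mem_filter]
    constructor
    · rintro ⟨hxB, hxS⟩
      refine ⟨hxS, fun ho => ?_⟩
      have hxA := (hmem x hxS).2 ho
      exact Finset.disjoint_left.mp hIS
        (hI₂ ▸ Finset.mem_inter.2 ⟨hxA, hxB⟩) hxS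
    · rintro ⟨hxS, ho⟩
      have hxU : x ∈ U := hSU hxS
      rw [hU₂] at hxU
      rcases Finset.mem_union.1 hxU with h' | h'
      · exact absurd ((hmem x hxS).1 h') ho
      · exact ⟨h', hxS⟩
  simp only [Prod.mk.injEq]
  exact ⟨hA₂eq, hB₂eq⟩
end
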